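/- arXiv:2404.01597 — 4 statements merged into one kernel-verified Lean document; each statement's English description precedes it below -/
import Mathlib

section
/- Let c_n denote the number of permutations π of [n] avoiding both 312 and 3214 whose square avoids 312. Then for n ≥ 3, c_n = c_{n−1} + c_{n−2} + n − ⌈n/2⌉. -/
open Equiv Finset

def Avoids312 {n : ℕ} (π : Equiv.Perm (Fin n)) : Prop :=
  ¬ ∃ i j l : Fin n, i < j ∧ j < l ∧ π j < π l ∧ π l < π i

def Avoids3214 {n : ℕ} (π : Equiv.Perm (Fin n)) : Prop :=
  ¬ ∃ i j l m : Fin n, i < j ∧ j < l ∧ l < m ∧ π l < π j ∧ π j < π i ∧ π i < π m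

noncomputable def c (n : ℕ) : ℕ :=
  Nat.card {π : Equiv.Perm (Fin n) // Avoids312 π ∧ Avoids3214 π ∧ Avoids312 (π * π)}

namespace Stmt14Aux

/-- restriction of a permutation fixing 0 -/
def restrictSucc {m : ℕ} (π : Perm (Fin (m+1))) (h : π 0 = 0) : Perm (Fin m) where
  toFun i := (π i.succ).pred (fun hc => (Fin.succ_ne_zero i) (π.injective (hc.trans h.symm)))
  invFun i := (π.symm i.succ).pred (fun hc => (Fin.succ_ne_zero i)
    (by
      have : i.succ = π 0 := by
        have := congrArg π hc
        rwa [Equiv.apply_symm_apply] at this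
      rw [h] at this; exact this))
  left_inv i := by
    simp only [Fin.succ_pred, Equiv.symm_apply_apply, Fin.pred_succ]
  right_inv i := by
    simp only [Fin.succ_pred, Equiv.apply_symm_apply, Fin.pred_succ]

lemma restrictSucc_succ {m : ℕ} (π : Perm (Fin (m+1))) (h : π 0 = 0) (i : Fin m) :
    π i.succ = ((restrictSucc π h) i).succ := by
  simp [restrictSucc, Fin.succ_pred]

/-- lift: add a fixed point at the bottom -/
def liftSucc {m : ℕ} (σ : Perm (Fin m)) : Perm (Fin (m+1)) where
  toFun i := Fin.cases 0 (fun j => (σ j).succ) i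
  invFun i := Fin.cases 0 (fun j => (σ.symm j).succ) i
  left_inv i := by
    cases i using Fin.cases with
    | zero => simp
    | succ j => simp
  right_inv i := by
    cases i using Fin.cases with
    | zero => simp
    | succ j => simp

@[simp] lemma liftSucc_zero {m : ℕ} (σ : Perm (Fin m)) : liftSucc σ 0 = 0 := rfl

@[simp] lemma liftSucc_succ {m : ℕ} (σ : Perm (Fin m)) (i : Fin m) :
    liftSucc σ i.succ = (σ i).succ := by
  show Fin.cases 0 (fun j => (σ j).succ) i.succ = (σ i).succ
  simp

/-- T1: transfer for the "one fixed point at bottom" shape -/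
lemma t1_312 {m : ℕ} (π : Perm (Fin (m+1))) (σ : Perm (Fin m)) (h0 : π 0 = 0)
    (hs : ∀ i, π i.succ = (σ i).succ) : Avoids312 π ↔ Avoids312 σ := by
  unfold Avoids312
  apply not_congr
  constructor
  · rintro ⟨i, j, l, hij, hjl, p1, p2⟩
    rcases Fin.eq_zero_or_eq_succ i with rfl | ⟨i', rfl⟩
    · rw [h0] at p2; exact absurd p2 (Fin.not_lt_zero _)
    rcases Fin.eq_zero_or_eq_succ j with rfl | ⟨j', rfl⟩
    · exact absurd hij (Fin.not_lt_zero _)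
    rcases Fin.eq_zero_or_eq_succ l with rfl | ⟨l', rfl⟩
    · exact absurd hjl (Fin.not_lt_zero _)
    rw [hs, hs] at p1
    rw [hs, hs] at p2
    exact ⟨i', j', l', by simpa using hij, by simpa using hjl,
      by simpa [Fin.succ_lt_succ_iff] using p1, by simpa [Fin.succ_lt_succ_iff] using p2⟩
  · rintro ⟨i, j, l, hij, hjl, p1, p2⟩
    exact ⟨i.succ, j.succ, l.succ, by simpa using hij, by simpa using hjl,
      by rw [hs, hs]; simpa [Fin.succ_lt_succ_iff] using p1,
      by rw [hs, hs]; simpa [Fin.succ_lt_succ_iff] using p2⟩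

lemma t1_3214 {m : ℕ} (π : Perm (Fin (m+1))) (σ : Perm (Fin m)) (h0 : π 0 = 0)
    (hs : ∀ i, π i.succ = (σ i).succ) : Avoids3214 π ↔ Avoids3214 σ := by
  unfold Avoids3214
  apply not_congr
  constructor
  · rintro ⟨i, j, l, mm, hij, hjl, hlm, p1, p2, p3⟩
    rcases Fin.eq_zero_or_eq_succ i with rfl | ⟨i', rfl⟩
    · rw [h0] at p2; exact absurd (p1.trans p2) (Fin.not_lt_zero _)
    rcases Fin.eq_zero_or_eq_succ j with rfl | ⟨j', rfl⟩
    · exact absurd hij (Fin.not_lt_zero _)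
    rcases Fin.eq_zero_or_eq_succ l with rfl | ⟨l', rfl⟩
    · exact absurd hjl (Fin.not_lt_zero _)
    rcases Fin.eq_zero_or_eq_succ mm with rfl | ⟨m', rfl⟩
    · exact absurd hlm (Fin.not_lt_zero _)
    rw [hs, hs] at p1
    rw [hs, hs] at p2
    rw [hs, hs] at p3
    exact ⟨i', j', l', m', by simpa using hij, by simpa using hjl, by simpa using hlm,
      by simpa [Fin.succ_lt_succ_iff] using p1, by simpa [Fin.succ_lt_succ_iff] using p2,
      by simpa [Fin.succ_lt_succ_iff] using p3⟩
  · rintro ⟨i, j, l, mm, hij, hjl, hlm, p1, p2, p3⟩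
    exact ⟨i.succ, j.succ, l.succ, mm.succ, by simpa using hij, by simpa using hjl,
      by simpa using hlm,
      by rw [hs, hs]; simpa [Fin.succ_lt_succ_iff] using p1,
      by rw [hs, hs]; simpa [Fin.succ_lt_succ_iff] using p2,
      by rw [hs, hs]; simpa [Fin.succ_lt_succ_iff] using p3⟩

lemma exists_succsucc {m : ℕ} (x : Fin (m+2)) (hx0 : x ≠ 0) (hx1 : x ≠ 1) :
    ∃ y : Fin m, x = y.succ.succ := by
  rcases Fin.eq_zero_or_eq_succ x with rfl | ⟨y, rfl⟩
  · exact absurd rfl hx0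
  rcases Fin.eq_zero_or_eq_succ y with rfl | ⟨z, rfl⟩
  · exact absurd Fin.succ_zero_eq_one hx1
  exact ⟨z, rfl⟩

lemma t2_312 {m : ℕ} (π : Perm (Fin (m+2))) (σ : Perm (Fin m)) (h0 : π 0 = 1) (h1 : π 1 = 0)
    (hs : ∀ i, π i.succ.succ = (σ i).succ.succ) : Avoids312 π ↔ Avoids312 σ := by
  unfold Avoids312
  apply not_congr
  constructor
  · rintro ⟨i, j, l, hij, hjl, p1, p2⟩
    by_cases hi0 : i = 0
    · subst hi0; rw [h0] at p2
      have v1 := Fin.lt_def.mp p1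
      have v2 := Fin.lt_def.mp p2
      simp only [Fin.val_one] at v2
      omega
    by_cases hi1 : i = 1
    · subst hi1; rw [h1] at p2; exact absurd p2 (Fin.not_lt_zero _)
    obtain ⟨i', rfl⟩ := exists_succsucc i hi0 hi1
    have hj0 : j ≠ 0 := by rintro rfl; exact absurd hij (Fin.not_lt_zero _)
    have hj1 : j ≠ 1 := by
      rintro rfl
      have := Fin.lt_def.mp hij
      simp [Fin.val_succ] at this
    obtain ⟨j', rfl⟩ := exists_succsucc j hj0 hj1
    have hl0 : l ≠ 0 := by rintro rfl; exact absurd hjl (Fin.not_lt_zero _)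
    have hl1 : l ≠ 1 := by
      rintro rfl
      have := Fin.lt_def.mp hjl
      simp [Fin.val_succ] at this
    obtain ⟨l', rfl⟩ := exists_succsucc l hl0 hl1
    rw [hs, hs] at p1; rw [hs, hs] at p2
    refine ⟨i', j', l', ?_, ?_, ?_, ?_⟩
    · have := Fin.lt_def.mp hij; simp only [Fin.val_succ] at this; exact Fin.lt_def.mpr (by omega)
    · have := Fin.lt_def.mp hjl; simp only [Fin.val_succ] at this; exact Fin.lt_def.mpr (by omega)
    · have := Fin.lt_def.mp p1; simp only [Fin.val_succ] at this; exact Fin.lt_def.mpr (by omega)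
    · have := Fin.lt_def.mp p2; simp only [Fin.val_succ] at this; exact Fin.lt_def.mpr (by omega)
  · rintro ⟨i, j, l, hij, hjl, p1, p2⟩
    refine ⟨i.succ.succ, j.succ.succ, l.succ.succ, ?_, ?_, ?_, ?_⟩
    · have := Fin.lt_def.mp hij; exact Fin.lt_def.mpr (by simp only [Fin.val_succ]; omega)
    · have := Fin.lt_def.mp hjl; exact Fin.lt_def.mpr (by simp only [Fin.val_succ]; omega)
    · rw [hs, hs]
      have := Fin.lt_def.mp p1; exact Fin.lt_def.mpr (by simp only [Fin.val_succ]; omega)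
    · rw [hs, hs]
      have := Fin.lt_def.mp p2; exact Fin.lt_def.mpr (by simp only [Fin.val_succ]; omega)

lemma t2_3214 {m : ℕ} (π : Perm (Fin (m+2))) (σ : Perm (Fin m)) (h0 : π 0 = 1) (h1 : π 1 = 0)
    (hs : ∀ i, π i.succ.succ = (σ i).succ.succ) : Avoids3214 π ↔ Avoids3214 σ := by
  unfold Avoids3214
  apply not_congr
  constructor
  · rintro ⟨i, j, l, mm, hij, hjl, hlm, p1, p2, p3⟩
    by_cases hi0 : i = 0
    · subst hi0; rw [h0] at p2
      have v1 := Fin.lt_def.mp p1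
      have v2 := Fin.lt_def.mp p2
      simp only [Fin.val_one] at v2
      omega
    by_cases hi1 : i = 1
    · subst hi1; rw [h1] at p2; exact absurd (p1.trans p2) (Fin.not_lt_zero _)
    obtain ⟨i', rfl⟩ := exists_succsucc i hi0 hi1
    have hj0 : j ≠ 0 := by rintro rfl; exact absurd hij (Fin.not_lt_zero _)
    have hj1 : j ≠ 1 := by
      rintro rfl
      have := Fin.lt_def.mp hij
      simp [Fin.val_succ] at this
    obtain ⟨j', rfl⟩ := exists_succsucc j hj0 hj1
    have hl0 : l ≠ 0 := by rintro rfl; exact absurd hjl (Fin.not_lt_zero _)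
    have hl1 : l ≠ 1 := by
      rintro rfl
      have := Fin.lt_def.mp hjl
      simp [Fin.val_succ] at this
    obtain ⟨l', rfl⟩ := exists_succsucc l hl0 hl1
    have hm0 : mm ≠ 0 := by rintro rfl; exact absurd hlm (Fin.not_lt_zero _)
    have hm1 : mm ≠ 1 := by
      rintro rfl
      have := Fin.lt_def.mp hlm
      simp [Fin.val_succ] at this
    obtain ⟨m', rfl⟩ := exists_succsucc mm hm0 hm1
    rw [hs, hs] at p1; rw [hs, hs] at p2; rw [hs, hs] at p3
    refine ⟨i', j', l', m', ?_, ?_, ?_, ?_, ?_, ?_⟩ <;>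
      [skip; skip; skip; skip; skip; skip]
    · have := Fin.lt_def.mp hij; simp only [Fin.val_succ] at this; exact Fin.lt_def.mpr (by omega)
    · have := Fin.lt_def.mp hjl; simp only [Fin.val_succ] at this; exact Fin.lt_def.mpr (by omega)
    · have := Fin.lt_def.mp hlm; simp only [Fin.val_succ] at this; exact Fin.lt_def.mpr (by omega)
    · have := Fin.lt_def.mp p1; simp only [Fin.val_succ] at this; exact Fin.lt_def.mpr (by omega)
    · have := Fin.lt_def.mp p2; simp only [Fin.val_succ] at this; exact Fin.lt_def.mpr (by omega)
    · have := Fin.lt_def.mp p3; simp only [Fin.val_succ] at this; exact Fin.lt_def.mpr (by omega)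
  · rintro ⟨i, j, l, mm, hij, hjl, hlm, p1, p2, p3⟩
    refine ⟨i.succ.succ, j.succ.succ, l.succ.succ, mm.succ.succ, ?_, ?_, ?_, ?_, ?_, ?_⟩
    · have := Fin.lt_def.mp hij; exact Fin.lt_def.mpr (by simp only [Fin.val_succ]; omega)
    · have := Fin.lt_def.mp hjl; exact Fin.lt_def.mpr (by simp only [Fin.val_succ]; omega)
    · have := Fin.lt_def.mp hlm; exact Fin.lt_def.mpr (by simp only [Fin.val_succ]; omega)
    · rw [hs, hs]
      have := Fin.lt_def.mp p1; exact Fin.lt_def.mpr (by simp only [Fin.val_succ]; omega)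
    · rw [hs, hs]
      have := Fin.lt_def.mp p2; exact Fin.lt_def.mpr (by simp only [Fin.val_succ]; omega)
    · rw [hs, hs]
      have := Fin.lt_def.mp p3; exact Fin.lt_def.mpr (by simp only [Fin.val_succ]; omega)

lemma t3_312 {m : ℕ} (π : Perm (Fin (m+2))) (σ : Perm (Fin m)) (h0 : π 0 = 0) (h1 : π 1 = 1)
    (hs : ∀ i, π i.succ.succ = (σ i).succ.succ) : Avoids312 π ↔ Avoids312 σ := by
  unfold Avoids312
  apply not_congr
  constructor
  · rintro ⟨i, j, l, hij, hjl, p1, p2⟩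
    by_cases hi0 : i = 0
    · subst hi0; rw [h0] at p2; exact absurd p2 (Fin.not_lt_zero _)
    by_cases hi1 : i = 1
    · subst hi1; rw [h1] at p2
      have v1 := Fin.lt_def.mp p1
      have v2 := Fin.lt_def.mp p2
      simp only [Fin.val_one] at v2
      omega
    obtain ⟨i', rfl⟩ := exists_succsucc i hi0 hi1
    have hj0 : j ≠ 0 := by rintro rfl; exact absurd hij (Fin.not_lt_zero _)
    have hj1 : j ≠ 1 := by
      rintro rfl
      have := Fin.lt_def.mp hij
      simp [Fin.val_succ] at this
    obtain ⟨j', rfl⟩ := exists_succsucc j hj0 hj1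
    have hl0 : l ≠ 0 := by rintro rfl; exact absurd hjl (Fin.not_lt_zero _)
    have hl1 : l ≠ 1 := by
      rintro rfl
      have := Fin.lt_def.mp hjl
      simp [Fin.val_succ] at this
    obtain ⟨l', rfl⟩ := exists_succsucc l hl0 hl1
    rw [hs, hs] at p1; rw [hs, hs] at p2
    refine ⟨i', j', l', ?_, ?_, ?_, ?_⟩
    · have := Fin.lt_def.mp hij; simp only [Fin.val_succ] at this; exact Fin.lt_def.mpr (by omega)
    · have := Fin.lt_def.mp hjl; simp only [Fin.val_succ] at this; exact Fin.lt_def.mpr (by omega)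
    · have := Fin.lt_def.mp p1; simp only [Fin.val_succ] at this; exact Fin.lt_def.mpr (by omega)
    · have := Fin.lt_def.mp p2; simp only [Fin.val_succ] at this; exact Fin.lt_def.mpr (by omega)
  · rintro ⟨i, j, l, hij, hjl, p1, p2⟩
    refine ⟨i.succ.succ, j.succ.succ, l.succ.succ, ?_, ?_, ?_, ?_⟩
    · have := Fin.lt_def.mp hij; exact Fin.lt_def.mpr (by simp only [Fin.val_succ]; omega)
    · have := Fin.lt_def.mp hjl; exact Fin.lt_def.mpr (by simp only [Fin.val_succ]; omega)
    · rw [hs, hs]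
      have := Fin.lt_def.mp p1; exact Fin.lt_def.mpr (by simp only [Fin.val_succ]; omega)
    · rw [hs, hs]
      have := Fin.lt_def.mp p2; exact Fin.lt_def.mpr (by simp only [Fin.val_succ]; omega)

/-- The permutation (v, v+1, ..., n-1, v-1, v-2, ..., 0). -/
def Bperm (n v : ℕ) (hv : v < n) : Perm (Fin n) where
  toFun i := ⟨if i.val < n - v then v + i.val else n - 1 - i.val, by
    have := i.isLt; split <;> omega⟩
  invFun y := ⟨if v ≤ y.val then y.val - v else n - 1 - y.val, by
    have := y.isLt; split <;> omega⟩
  left_inv i := by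
    have := i.isLt
    apply Fin.ext
    simp only
    split <;> split <;> omega
  right_inv y := by
    have := y.isLt
    apply Fin.ext
    simp only
    split <;> split <;> omega

lemma Bperm_val (n v : ℕ) (hv : v < n) (i : Fin n) :
    (Bperm n v hv i).val = if i.val < n - v then v + i.val else n - 1 - i.val := rfl

lemma Bperm_av312 (n v : ℕ) (hv : v < n) : Avoids312 (Bperm n v hv) := by
  rintro ⟨i, j, l, hij, hjl, p1, p2⟩
  have hi := i.isLt; have hj := j.isLt; have hl := l.isLt
  rw [Fin.lt_def] at hij hjl p1 p2
  simp only [Bperm_val] at p1 p2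
  split_ifs at p1 p2 <;> omega

lemma Bperm_av3214 (n v : ℕ) (hv : v < n) : Avoids3214 (Bperm n v hv) := by
  rintro ⟨i, j, l, mm, hij, hjl, hlm, p1, p2, p3⟩
  have hi := i.isLt; have hj := j.isLt; have hl := l.isLt; have hm := mm.isLt
  rw [Fin.lt_def] at hij hjl hlm p1 p2 p3
  simp only [Bperm_val] at p1 p2 p3
  split_ifs at p1 p2 p3 <;> omega

lemma Bperm_sq_av312 (n v : ℕ) (hv : v < n) (h2v : n ≤ 2 * v) :
    Avoids312 (Bperm n v hv * Bperm n v hv) := by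
  rintro ⟨i, j, l, hij, hjl, p1, p2⟩
  have hi := i.isLt; have hj := j.isLt; have hl := l.isLt
  rw [Fin.lt_def] at hij hjl p1 p2
  simp only [Equiv.Perm.mul_apply, Bperm_val] at p1 p2
  split_ifs at p1 p2 <;> omega

lemma Bperm_zero (n v : ℕ) (hv : v < n) (hn : 0 < n) :
    (Bperm n v hv ⟨0, hn⟩).val = v := by
  simp only [Bperm_val]
  split <;> omega

lemma caseB_core (n : ℕ) (hn : 3 ≤ n)
    (P S : ℕ → ℕ)
    (hPlt : ∀ k, k < n → P k < n)
    (hSlt : ∀ k, k < n → S k < n)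
    (hPS : ∀ w, w < n → P (S w) = w)
    (hPinj : ∀ a b, a < n → b < n → P a = P b → a = b)
    (hP0 : P 0 = 1)
    (pat312 : ∀ a b c, a < b → b < c → c < n → P b < P c → P c < P a → False)
    (patsq : ∀ a b c, a < b → b < c → c < n → P (P b) < P (P c) → P (P c) < P (P a) → False) :
    P 1 = 0 := by
  by_contra hP1
  have hS0 := hPS 0 (by omega)
  have hS0lt := hSlt 0 (by omega)
  have ht0 : S 0 ≠ 0 := by intro h; rw [h] at hS0; omega
  have ht1 : S 0 ≠ 1 := by intro h; rw [h] at hS0; exact hP1 hS0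
  have ht2 : 2 ≤ S 0 := by omega
  have hSt := hPS (S 0) hS0lt
  have hStlt := hSlt (S 0) hS0lt
  have hst0 : S (S 0) ≠ 0 := by intro h; rw [h] at hSt; omega
  have hstne : S (S 0) ≠ S 0 := by intro h; rw [h] at hSt; omega
  have hst : S (S 0) < S 0 := by
    by_contra hc
    have hts : S 0 < S (S 0) := by omega
    by_cases hex : ∃ i0, i0 < S 0 ∧ S 0 < P i0
    · obtain ⟨i0, hi1, hi2⟩ := hex
      exact pat312 i0 (S 0) (S (S 0)) hi1 hts hStlt (by omega) (by omega)
    · push_neg at hex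
      have hlt : ∀ i0, i0 ≤ S 0 → P i0 < S 0 := by
        intro i0 hi
        rcases Nat.lt_or_ge i0 (S 0) with h | h
        · have h1 := hex i0 h
          have h2 : P i0 ≠ S 0 := by
            intro he
            have : i0 = S (S 0) := hPinj i0 (S (S 0)) (by omega) hStlt (by rw [he, hSt])
            omega
          omega
        · have : i0 = S 0 := by omega
          rw [this, hS0]; omega
      have hfinj : Function.Injective
          (fun k : Fin (S 0 + 1) => (⟨P k.val, hlt k.val (by omega)⟩ : Fin (S 0))) := by
        intro a b hab
        have h1 : P a.val = P b.val := congrArg Fin.val hab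
        have := hPinj a.val b.val (by have := a.isLt; omega) (by have := b.isLt; omega) h1
        exact Fin.ext this
      have := Fintype.card_le_of_injective _ hfinj
      simp only [Fintype.card_fin] at this
      omega
  have hs1 : 1 ≤ S (S 0) := by omega
  have ha0 : P 1 ≠ 0 := hP1
  have ha1 : P 1 ≠ 1 := by
    intro h
    have := hPinj 1 0 (by omega) (by omega) (by rw [h, hP0])
    omega
  refine patsq 0 (S (S 0)) (S 0) (by omega) hst hS0lt ?_ ?_
  · rw [hSt, hS0]
    omega
  · rw [hS0, hP0]
    omega

lemma caseC_core (n v : ℕ) (hn : 3 ≤ n) (hv : 2 ≤ v)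
    (P S : ℕ → ℕ)
    (hPlt : ∀ k, k < n → P k < n)
    (hSlt : ∀ k, k < n → S k < n)
    (hPS : ∀ w, w < n → P (S w) = w)
    (hPinj : ∀ a b, a < n → b < n → P a = P b → a = b)
    (hP0 : P 0 = v)
    (pat312 : ∀ a b c, a < b → b < c → c < n → P b < P c → P c < P a → False)
    (pat3214 : ∀ a b c d, a < b → b < c → c < d → d < n → P c < P b → P b < P a → P a < P d → False)
    (patsq : ∀ a b c, a < b → b < c → c < n → P (P b) < P (P c) → P (P c) < P (P a) → False) :
    n ≤ 2 * v ∧ ∀ k, k < n → P k = if k < n - v then v + k else n - 1 - k := by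
  have hvn : v < n := hP0 ▸ hPlt 0 (by omega)
  -- L1 : values below v appear in decreasing order
  have L1 : ∀ a b, a < n → b < n → 1 ≤ a → P a < P b → P b < v → b < a := by
    intro a b ha hb h1 h2 h3
    by_contra hc
    have hne : a ≠ b := by intro h; rw [h] at h2; omega
    exact pat312 0 a b (by omega) (by omega) hb h2 (by omega)
  -- L3 : the tail is forced
  have L3 : ∀ j, j + 2 ≤ v → P (n-1-j) = j := by
    intro j
    induction j using Nat.strong_induction_on with
    | _ j IH =>
      intro hj
      have hbn : n-1-j < n := by omega
      have hcn : P (n-1-j) < n := hPlt _ hbn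
      have hcv : P (n-1-j) ≠ v := by
        intro h
        have := hPinj (n-1-j) 0 hbn (by omega) (by omega)
        omega
      rcases Nat.lt_or_ge (P (n-1-j)) v with hlt | hge
      · rcases lt_trichotomy (P (n-1-j)) j with h1 | h1 | h1
        · exfalso
          have e1 := IH _ h1 (by omega)
          have e2 := hPinj (n-1-(P (n-1-j))) (n-1-j) (by omega) hbn (by omega)
          omega
        · exact h1
        · exfalso
          have hsj := hPS j (by omega)
          have hSj := hSlt j (by omega)
          have hS0 : S j ≠ 0 := by intro h; rw [h] at hsj; omega
          have hL := L1 (S j) (n-1-j) hSj hbn (by omega) (by omega) hlt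
          have hk : n-1-(S j) < j := by omega
          have e1 := IH _ hk (by omega)
          have heq : n-1-(n-1-(S j)) = S j := by omega
          rw [heq] at e1
          omega
      · exfalso
        have e1 := hPS (v-1) (by omega)
        have l1 := hSlt (v-1) (by omega)
        have e2 := hPS (v-2) (by omega)
        have l2 := hSlt (v-2) (by omega)
        have h10 : S (v-1) ≠ 0 := by intro h; rw [h] at e1; omega
        have h20 : S (v-2) ≠ 0 := by intro h; rw [h] at e2; omega
        have h12 : S (v-1) < S (v-2) := L1 (S (v-2)) (S (v-1)) l2 l1 (by omega) (by omega) (by omega)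
        have h2j : S (v-2) ≠ n-1-j := by intro h; rw [h] at e2; omega
        have h2j' : S (v-2) < n-1-j := by
          by_contra hc
          have hk : n-1-(S (v-2)) < j := by omega
          have e3 := IH _ hk (by omega)
          have heq : n-1-(n-1-(S (v-2))) = S (v-2) := by omega
          rw [heq] at e3
          omega
        exact pat3214 0 (S (v-1)) (S (v-2)) (n-1-j) (by omega) h12 h2j' hbn
          (by omega) (by omega) (by omega)
  -- tail values
  have tailP : ∀ k, n-v+1 ≤ k → k ≤ n-1 → P k = n-1-k := by
    intro k h1 h2
    have e := L3 (n-1-k) (by omega)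
    have heq : n-1-(n-1-k) = k := by omega
    rw [heq] at e
    omega
  have hN1 : P (n-1) = 0 := by
    have := L3 0 (by omega)
    rwa [Nat.sub_zero] at this
  -- block values
  have blockVal : ∀ x, 1 ≤ x → x ≤ n-v → (P x = v-1 ∨ v+1 ≤ P x) := by
    intro x h1 h2
    have hx : x < n := by omega
    have hPx := hPlt x hx
    have hxv : P x ≠ v := by
      intro h
      have := hPinj x 0 hx (by omega) (by omega)
      omega
    rcases Nat.lt_or_ge (P x) (v-1) with h | h
    · exfalso
      have e := L3 (P x) (by omega)
      have := hPinj (n-1-(P x)) x (by omega) hx (by omega)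
      omega
    · omega
  -- positions of large values are in the block
  have posRange : ∀ w, v+1 ≤ w → w ≤ n-1 → (1 ≤ S w ∧ S w ≤ n-v) := by
    intro w h1 h2
    have hw : w < n := by omega
    have e := hPS w hw
    have l := hSlt w hw
    constructor
    · rcases Nat.eq_zero_or_pos (S w) with h | h
      · rw [h] at e; omega
      · exact h
    · by_contra hc
      have := tailP (S w) (by omega) (by omega)
      omega
  have posvm1 : 1 ≤ S (v-1) ∧ S (v-1) ≤ n-v := by
    have e := hPS (v-1) (by omega)
    have l := hSlt (v-1) (by omega)
    constructor
    · rcases Nat.eq_zero_or_pos (S (v-1)) with h | h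
      · rw [h] at e; omega
      · exact h
    · by_contra hc
      have := tailP (S (v-1)) (by omega) (by omega)
      omega
  -- C0' : P v < v
  have hC0 : P v < v := by
    by_cases hvt : v = n-1
    · rw [hvt, hN1]; omega
    · by_contra hge
      have hvv : P v ≠ v := by
        intro h
        have := hPinj v 0 (by omega) (by omega) (by omega)
        omega
      have hq := posRange (n-1) (by omega) (by omega)
      have hqe := hPS (n-1) (by omega)
      have k1 : P (P (S (n-1))) = 0 := by rw [hqe, hN1]
      have k2 : P (P (n-1)) = v := by rw [hN1, hP0]
      have k3 : P (P 0) = P v := by rw [hP0]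
      exact patsq 0 (S (n-1)) (n-1) (by omega) (by omega) (by omega) (by omega) (by omega)
  -- Case II is impossible : n ≤ 2v
  have h2v : n ≤ 2*v := by
    by_contra hcn2
    have hPv : P v = v-1 := by
      have := blockVal v (by omega) (by omega)
      omega
    have hu : n-v+1 ≤ P 1 := by
      have hbv := blockVal 1 (by omega) (by omega)
      have hu1 : P 1 ≠ v-1 := by
        intro h
        have := hPinj 1 v (by omega) (by omega) (by omega)
        omega
      by_contra hc2
      have hP1lt := hPlt 1 (by omega)
      have hb2 := blockVal (P 1) (by omega) (by omega)
      have hne2 : P (P 1) ≠ v-1 := by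
        intro h
        have := hPinj (P 1) v (by omega) (by omega) (by omega)
        omega
      have hq := posRange (n-1) (by omega) (by omega)
      have hqe := hPS (n-1) (by omega)
      have hq1 : S (n-1) ≠ 1 := by intro h; rw [h] at hqe; omega
      have k1 : P (P (S (n-1))) = 0 := by rw [hqe, hN1]
      have k2 : P (P (n-1)) = v := by rw [hN1, hP0]
      exact patsq 1 (S (n-1)) (n-1) (by omega) (by omega) (by omega) (by omega) (by omega)
    have hi0r := posRange (v+1) (by omega) (by omega)
    have hi0e := hPS (v+1) (by omega)
    have hi01 : S (v+1) ≠ 1 := by intro h; rw [h] at hi0e; omega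
    have hi0v : S (v+1) ≠ v := by
      intro h
      rw [h] at hi0e; omega
    rcases Nat.lt_or_ge v (S (v+1)) with hgt | hle
    · exact pat312 1 v (S (v+1)) (by omega) hgt (by omega) (by omega) (by omega)
    · have hi0lt : S (v+1) < v := by omega
      have hpig : ∃ w, n-v+1 ≤ w ∧ w ≤ n-1 ∧ S (v+1) < S w := by
        by_contra hcp
        push_neg at hcp
        have hbound : ∀ k : ℕ, k < v-1 → S (n-v+1+k) - 1 < S (v+1) - 1 := by
          intro k hk
          have h1 := hcp (n-v+1+k) (by omega) (by omega)
          have h2 := posRange (n-v+1+k) (by omega) (by omega)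
          have h3 : S (n-v+1+k) ≠ S (v+1) := by
            intro h
            have e1 := hPS (n-v+1+k) (by omega)
            rw [h, hi0e] at e1
            omega
          omega
        have hfinj : Function.Injective
            (fun k : Fin (v-1) => (⟨S (n-v+1+k.val) - 1, hbound k.val k.isLt⟩ : Fin (S (v+1) - 1))) := by
          intro a b hab
          have h1 : S (n-v+1+a.val) - 1 = S (n-v+1+b.val) - 1 := congrArg Fin.val hab
          have h2a := posRange (n-v+1+a.val) (by omega) (by have := a.isLt; omega)
          have h2b := posRange (n-v+1+b.val) (by omega) (by have := b.isLt; omega)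
          have h3 : S (n-v+1+a.val) = S (n-v+1+b.val) := by omega
          have e1 := hPS (n-v+1+a.val) (by have := a.isLt; omega)
          have e2 := hPS (n-v+1+b.val) (by have := b.isLt; omega)
          rw [h3, e2] at e1
          exact Fin.ext (by omega)
        have := Fintype.card_le_of_injective _ hfinj
        simp only [Fintype.card_fin] at this
        omega
      obtain ⟨w, hw1, hw2, hw3⟩ := hpig
      have hwr := posRange w (by omega) (by omega)
      have hwe := hPS w (by omega)
      have k1 : P (P (S (v+1))) = P (v+1) := by rw [hi0e]
      have hbv1 : P (v+1) ≠ v-1 := by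
        intro h
        have := hPinj (v+1) v (by omega) (by omega) (by omega)
        omega
      have kk := blockVal (v+1) (by omega) (by omega)
      have k2 : P (P (S w)) = n-1-w := by
        rw [hwe]
        exact tailP w (by omega) (by omega)
      have k3 : P (P (n-1)) = v := by rw [hN1, hP0]
      exact patsq (S (v+1)) (S w) (n-1) hw3 (by omega) (by omega) (by omega) (by omega)
  -- Step 1 : position of v-1 is n-v
  have hze := hPS (v-1) (by omega)
  have hzb : S (v-1) = n-v := by
    by_contra hzb'
    have hz1 := posvm1.1
    have hz2 : S (v-1) ≤ n-v-1 := by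
      have := posvm1.2; omega
    have hPb : v+1 ≤ P (n-v) := by
      have hb := blockVal (n-v) (by omega) (by omega)
      have : P (n-v) ≠ v-1 := by
        intro h
        have := hPinj (n-v) (S (v-1)) (by omega) (by omega) (by omega)
        omega
      omega
    rcases lt_trichotomy n (2*v) with hA | hA | hA
    · -- 2v ≥ n+1
      rcases Nat.lt_or_ge (n+1) (2*v) with hB | hB
      · -- 2v ≥ n+2 : pattern (v-1, n-1-z, n-1)
        have t1 : P (v-1) = n-v := by
          have := tailP (v-1) (by omega) (by omega)
          omega
        have k1 : P (P (v-1)) = P (n-v) := by rw [t1]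
        have t2 : P (n-1-S (v-1)) = S (v-1) := by
          have := tailP (n-1-S (v-1)) (by omega) (by omega)
          omega
        have k2 : P (P (n-1-S (v-1))) = v-1 := by rw [t2, hze]
        have k3 : P (P (n-1)) = v := by rw [hN1, hP0]
        exact patsq (v-1) (n-1-S (v-1)) (n-1) (by omega) (by omega) (by omega) (by omega) (by omega)
      · -- 2v = n+1
        have hB' : 2*v = n+1 := by omega
        have t1 : P (v-1) = P (n-v) := by
          have : v-1 = n-v := by omega
          rw [this]
        have k1 : P (P (S (v-1))) = P (n-v) := by rw [hze, t1]
        have t2 : P (n-1-S (v-1)) = S (v-1) := by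
          have := tailP (n-1-S (v-1)) (by omega) (by omega)
          omega
        have k2 : P (P (n-1-S (v-1))) = v-1 := by rw [t2, hze]
        have k3 : P (P (n-1)) = v := by rw [hN1, hP0]
        exact patsq (S (v-1)) (n-1-S (v-1)) (n-1) (by omega) (by omega) (by omega) (by omega) (by omega)
    · -- 2v = n : contradicts hC0
      have : n-v = v := by omega
      rw [this] at hPb
      omega
    · omega
  have hPnv : P (n-v) = v-1 := by rw [← hzb]; exact hze
  -- Step 2 : the block is increasing
  have asc : ∀ p q, 1 ≤ p → p < q → q ≤ n-v-1 → P p < P q := by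
    intro p q h1 h2 h3
    by_contra hc
    have hbp : v+1 ≤ P p := by
      have hb := blockVal p (by omega) (by omega)
      have : P p ≠ v-1 := by
        intro h
        have := hPinj p (n-v) (by omega) (by omega) (by omega)
        omega
      omega
    have hbq : v+1 ≤ P q := by
      have hb := blockVal q (by omega) (by omega)
      have : P q ≠ v-1 := by
        intro h
        have := hPinj q (n-v) (by omega) (by omega) (by omega)
        omega
      omega
    have hne : P p ≠ P q := by
      intro h
      have := hPinj p q (by omega) (by omega) h
      omega
    have hplt := hPlt p (by omega)
    have hqlt := hPlt q (by omega)
    have t1 : P (P p) = n-1-(P p) := tailP _ (by omega) (by omega)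
    have t2 : P (P q) = n-1-(P q) := tailP _ (by omega) (by omega)
    have t0 : P (P 0) = n-v-1 := by
      rw [hP0]
      rcases Nat.lt_or_ge v (n-v+1) with h | h
      · have : v = n-v := by omega
        rw [this, hPnv]
        omega
      · have := tailP v (by omega) (by omega)
        omega
    exact patsq 0 p q (by omega) h2 (by omega) (by omega) (by omega)
  -- Step 3 : exact values on the block
  have lo : ∀ p, 1 ≤ p → p ≤ n-v-1 → v + p ≤ P p := by
    intro p
    induction p with
    | zero => intro h1 _; omega
    | succ p IHp =>
      intro h1 h2
      rcases Nat.eq_zero_or_pos p with rfl | hp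
      · simp only [Nat.zero_add]
        have hb := blockVal 1 (by omega) (by omega)
        have : P 1 ≠ v-1 := by
          intro h
          have := hPinj 1 (n-v) (by omega) (by omega) (by omega)
          omega
        omega
      · have e1 := IHp (by omega) (by omega)
        have e2 := asc p (p+1) (by omega) (by omega) h2
        omega
  have hi : ∀ d p, 1 ≤ p → p + d = n-v-1 → P p ≤ v + p := by
    intro d
    induction d with
    | zero =>
      intro p h1 h2
      have := hPlt p (by omega)
      omega
    | succ d IHd =>
      intro p h1 h2
      have h3 := IHd (p+1) (by omega) (by omega)
      have h4 := asc p (p+1) (by omega) (by omega) (by omega)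
      omega
  refine ⟨h2v, ?_⟩
  intro k hk
  by_cases hk0 : k = 0
  · subst hk0
    rw [if_pos (by omega)]
    omega
  · by_cases hkb : k ≤ n-v-1
    · rw [if_pos (by omega)]
      have e1 := lo k (by omega) hkb
      have e2 := hi (n-v-1-k) k (by omega) (by omega)
      omega
    · by_cases hkb2 : k = n-v
      · subst hkb2
        rw [if_neg (by omega)]
        omega
      · rw [if_neg (by omega)]
        exact tailP k (by omega) (by omega)

/-- ℕ-level version of a permutation -/
def Pfun {n : ℕ} (π : Perm (Fin n)) : ℕ → ℕ := fun k => if h : k < n then (π ⟨k, h⟩).val else 0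

lemma Pfun_eq {n : ℕ} (π : Perm (Fin n)) (k : ℕ) (h : k < n) :
    Pfun π k = (π ⟨k, h⟩).val := dif_pos h

lemma Pfun_lt {n : ℕ} (π : Perm (Fin n)) (k : ℕ) (h : k < n) : Pfun π k < n := by
  rw [Pfun_eq π k h]; exact (π _).isLt

lemma Pfun_apply {n : ℕ} (π : Perm (Fin n)) (x : Fin n) : Pfun π x.val = (π x).val := by
  rw [Pfun_eq π x.val x.isLt, Fin.eta]

lemma Pfun_PS {n : ℕ} (π : Perm (Fin n)) (w : ℕ) (h : w < n) :
    Pfun π (Pfun π.symm w) = w := by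
  rw [Pfun_eq π.symm w h, Pfun_apply]
  exact congrArg Fin.val (π.apply_symm_apply ⟨w, h⟩)

lemma Pfun_inj {n : ℕ} (π : Perm (Fin n)) (a b : ℕ) (ha : a < n) (hb : b < n)
    (h : Pfun π a = Pfun π b) : a = b := by
  rw [Pfun_eq π a ha, Pfun_eq π b hb] at h
  have := π.injective (Fin.ext h)
  exact congrArg Fin.val this

lemma Pfun_sq {n : ℕ} (π : Perm (Fin n)) (k : ℕ) (h : k < n) :
    ((π * π) ⟨k, h⟩).val = Pfun π (Pfun π k) := by
  rw [Equiv.Perm.mul_apply, ← Pfun_apply, ← Pfun_eq π k h]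

lemma pat312_of {n : ℕ} (π : Perm (Fin n)) (h312 : Avoids312 π) :
    ∀ a b c, a < b → b < c → c < n → Pfun π b < Pfun π c → Pfun π c < Pfun π a → False := by
  intro a b c hab hbc hc h1 h2
  have han : a < n := by omega
  have hbn : b < n := by omega
  rw [Pfun_eq π b hbn, Pfun_eq π c hc] at h1
  rw [Pfun_eq π c hc, Pfun_eq π a han] at h2
  exact h312 ⟨⟨a, han⟩, ⟨b, hbn⟩, ⟨c, hc⟩, Fin.mk_lt_mk.mpr hab, Fin.mk_lt_mk.mpr hbc,
    Fin.lt_def.mpr h1, Fin.lt_def.mpr h2⟩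

lemma pat3214_of {n : ℕ} (π : Perm (Fin n)) (h3214 : Avoids3214 π) :
    ∀ a b c d, a < b → b < c → c < d → d < n → Pfun π c < Pfun π b → Pfun π b < Pfun π a →
      Pfun π a < Pfun π d → False := by
  intro a b c d hab hbc hcd hd h1 h2 h3
  have han : a < n := by omega
  have hbn : b < n := by omega
  have hcn : c < n := by omega
  rw [Pfun_eq π c hcn, Pfun_eq π b hbn] at h1
  rw [Pfun_eq π b hbn, Pfun_eq π a han] at h2
  rw [Pfun_eq π a han, Pfun_eq π d hd] at h3
  exact h3214 ⟨⟨a, han⟩, ⟨b, hbn⟩, ⟨c, hcn⟩, ⟨d, hd⟩, Fin.mk_lt_mk.mpr hab,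
    Fin.mk_lt_mk.mpr hbc, Fin.mk_lt_mk.mpr hcd, Fin.lt_def.mpr h1, Fin.lt_def.mpr h2,
    Fin.lt_def.mpr h3⟩

lemma patsq_of {n : ℕ} (π : Perm (Fin n)) (hsq : Avoids312 (π * π)) :
    ∀ a b c, a < b → b < c → c < n →
      Pfun π (Pfun π b) < Pfun π (Pfun π c) → Pfun π (Pfun π c) < Pfun π (Pfun π a) → False := by
  intro a b c hab hbc hc h1 h2
  have han : a < n := by omega
  have hbn : b < n := by omega
  rw [← Pfun_sq π b hbn, ← Pfun_sq π c hc] at h1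
  rw [← Pfun_sq π c hc, ← Pfun_sq π a han] at h2
  exact hsq ⟨⟨a, han⟩, ⟨b, hbn⟩, ⟨c, hc⟩, Fin.mk_lt_mk.mpr hab, Fin.mk_lt_mk.mpr hbc,
    Fin.lt_def.mpr h1, Fin.lt_def.mpr h2⟩

lemma zero_fin {m : ℕ} (h : 0 < m+3) : (⟨0, h⟩ : Fin (m+3)) = 0 := rfl

lemma caseB_perm {m : ℕ} (π : Perm (Fin (m+3))) (h1 : Avoids312 π) (h3 : Avoids312 (π * π))
    (h0 : π 0 = 1) : π 1 = 0 := by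
  have hP0 : Pfun π 0 = 1 := by
    rw [Pfun_eq π 0 (Nat.succ_pos _), zero_fin, h0, Fin.val_one]
  have := caseB_core (m+3) (by omega) (Pfun π) (Pfun π.symm)
    (fun k h => Pfun_lt π k h) (fun k h => Pfun_lt π.symm k h)
    (fun w h => Pfun_PS π w h) (fun a b ha hb h => Pfun_inj π a b ha hb h) hP0
    (pat312_of π h1) (patsq_of π h3)
  rw [Pfun_eq π 1 (by omega : (1:ℕ) < m+3)] at this
  have h11 : (⟨1, by omega⟩ : Fin (m+3)) = 1 := rfl
  rw [h11] at this
  exact Fin.ext (by rw [this, Fin.val_zero])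

lemma caseC_perm {m : ℕ} (π : Perm (Fin (m+3)))
    (h1 : Avoids312 π) (h2 : Avoids3214 π) (h3 : Avoids312 (π * π))
    (hv : 2 ≤ (π 0).val) :
    (m+3) ≤ 2 * (π 0).val ∧ π = Bperm (m+3) (π 0).val (π 0).isLt := by
  have hP0 : Pfun π 0 = (π 0).val := by
    rw [Pfun_eq π 0 (Nat.succ_pos _), zero_fin]
  have hcore := caseC_core (m+3) (π 0).val (by omega) hv (Pfun π) (Pfun π.symm)
    (fun k h => Pfun_lt π k h) (fun k h => Pfun_lt π.symm k h)
    (fun w h => Pfun_PS π w h) (fun a b ha hb h => Pfun_inj π a b ha hb h) hP0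
    (pat312_of π h1) (pat3214_of π h2) (patsq_of π h3)
  refine ⟨hcore.1, ?_⟩
  apply Equiv.ext
  intro x
  apply Fin.ext
  rw [Bperm_val]
  have := hcore.2 x.val x.isLt
  rw [Pfun_apply] at this
  exact this

def Good {n : ℕ} (π : Perm (Fin n)) : Prop :=
  Avoids312 π ∧ Avoids3214 π ∧ Avoids312 (π * π)

lemma c_eq (n : ℕ) : c n = Nat.card {π : Perm (Fin n) // Good π} := rfl

lemma nat_card_split {α : Type*} [Finite α] (p q : α → Prop) :
    Nat.card {x // p x} = Nat.card {x // p x ∧ q x} + Nat.card {x // p x ∧ ¬ q x} := by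
  classical
  have e : {x // p x} ≃ {x // p x ∧ q x} ⊕ {x // p x ∧ ¬ q x} :=
    ((Equiv.sumCompl (fun y : {x // p x} => q y.1)).symm).trans
      (Equiv.sumCongr (Equiv.subtypeSubtypeEquivSubtypeInter p q)
        (Equiv.subtypeSubtypeEquivSubtypeInter p (fun x => ¬ q x)))
  rw [Nat.card_congr e, Nat.card_sum]

lemma good_iff_r1 {m : ℕ} (π : Perm (Fin (m+1))) (h0 : π 0 = 0) :
    Good π ↔ Good (restrictSucc π h0) := by
  have hs := restrictSucc_succ π h0
  have hsq0 : (π * π) 0 = 0 := by rw [Equiv.Perm.mul_apply, h0, h0]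
  have hsqs : ∀ i, (π * π) i.succ = ((restrictSucc π h0 * restrictSucc π h0) i).succ := by
    intro i
    rw [Equiv.Perm.mul_apply, Equiv.Perm.mul_apply, hs i, hs ((restrictSucc π h0) i)]
  exact and_congr (t1_312 π _ h0 hs)
    (and_congr (t1_3214 π _ h0 hs) (t1_312 (π*π) _ hsq0 hsqs))

lemma good_iff_2 {m : ℕ} (π : Perm (Fin (m+2))) (σ : Perm (Fin m)) (h0 : π 0 = 1)
    (h1 : π 1 = 0) (hs : ∀ i, π i.succ.succ = (σ i).succ.succ) : Good π ↔ Good σ := by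
  have hsq0 : (π * π) 0 = 0 := by rw [Equiv.Perm.mul_apply, h0, h1]
  have hsq1 : (π * π) 1 = 1 := by rw [Equiv.Perm.mul_apply, h1, h0]
  have hsqs : ∀ i, (π * π) i.succ.succ = ((σ * σ) i).succ.succ := by
    intro i
    rw [Equiv.Perm.mul_apply, Equiv.Perm.mul_apply, hs i, hs (σ i)]
  exact and_congr (t2_312 π σ h0 h1 hs)
    (and_congr (t2_3214 π σ h0 h1 hs) (t3_312 (π*π) (σ*σ) hsq0 hsq1 hsqs))

lemma cardA (m : ℕ) :
    Nat.card {π : Perm (Fin (m+1)) // Good π ∧ π 0 = 0} = c m := by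
  rw [c_eq]
  apply Nat.card_congr
  refine ⟨fun x => ⟨restrictSucc x.1 x.2.2, (good_iff_r1 x.1 x.2.2).mp x.2.1⟩,
    fun y => ⟨liftSucc y.1, ?_, liftSucc_zero y.1⟩, ?_, ?_⟩
  · exact (good_iff_r1 (liftSucc y.1) (liftSucc_zero y.1)).mpr
      (by
        have : restrictSucc (liftSucc y.1) (liftSucc_zero y.1) = y.1 := by
          apply Equiv.ext
          intro i
          apply Fin.succ_injective
          rw [← restrictSucc_succ (liftSucc y.1) (liftSucc_zero y.1) i, liftSucc_succ]
        rw [this]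
        exact y.2)
  · intro x
    apply Subtype.ext
    apply Equiv.ext
    intro z
    rcases Fin.eq_zero_or_eq_succ z with rfl | ⟨w, rfl⟩
    · rw [liftSucc_zero, x.2.2]
    · rw [liftSucc_succ, ← restrictSucc_succ x.1 x.2.2 w]
  · intro y
    apply Subtype.ext
    apply Equiv.ext
    intro i
    apply Fin.succ_injective
    rw [← restrictSucc_succ (liftSucc y.1) (liftSucc_zero y.1) i, liftSucc_succ]

/-- total version of the double restriction -/
noncomputable def restrict2 {m : ℕ} (π : Perm (Fin (m+2))) : Perm (Fin m) := by
  classical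
  exact if h0 : (Equiv.swap 0 1 * π : Perm (Fin (m+2))) 0 = 0 then
    (if h1 : restrictSucc (Equiv.swap 0 1 * π) h0 0 = 0 then
      restrictSucc (restrictSucc (Equiv.swap 0 1 * π) h0) h1
    else 1)
  else 1

lemma succsucc_ne_zero {m : ℕ} (x : Fin m) : (x.succ.succ : Fin (m+2)) ≠ 0 :=
  Fin.succ_ne_zero _

lemma succsucc_ne_one {m : ℕ} (x : Fin m) : (x.succ.succ : Fin (m+2)) ≠ 1 := by
  intro h
  rw [← Fin.succ_zero_eq_one] at h
  exact Fin.succ_ne_zero x (Fin.succ_injective _ h)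

lemma restrict2_spec {m : ℕ} (π : Perm (Fin (m+2))) (h0 : π 0 = 1) (h1 : π 1 = 0) :
    ∀ i, π i.succ.succ = ((restrict2 π) i).succ.succ := by
  have pf0 : (Equiv.swap 0 1 * π : Perm (Fin (m+2))) 0 = 0 := by
    rw [Equiv.Perm.mul_apply, h0, Equiv.swap_apply_right]
  have pf1 : restrictSucc (Equiv.swap 0 1 * π) pf0 0 = 0 := by
    apply Fin.succ_injective
    rw [← restrictSucc_succ (Equiv.swap 0 1 * π) pf0 0, Fin.succ_zero_eq_one,
      Equiv.Perm.mul_apply, h1, Equiv.swap_apply_left]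
  intro i
  have e1 := restrictSucc_succ (Equiv.swap 0 1 * π) pf0 i.succ
  have e2 := restrictSucc_succ (restrictSucc (Equiv.swap 0 1 * π) pf0) pf1 i
  rw [e2] at e1
  -- e1 : (swap 0 1 * π) i.succ.succ = σ i |>.succ.succ  where σ is the double restriction
  have hr : restrict2 π = restrictSucc (restrictSucc (Equiv.swap 0 1 * π) pf0) pf1 := by
    rw [restrict2, dif_pos pf0, dif_pos pf1]
  rw [hr]
  have : π i.succ.succ
      = Equiv.swap 0 1 ((Equiv.swap 0 1 * π : Perm (Fin (m+2))) i.succ.succ) := by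
    rw [Equiv.Perm.mul_apply, Equiv.swap_apply_self]
  rw [this, e1]
  exact Equiv.swap_apply_of_ne_of_ne (succsucc_ne_zero _) (succsucc_ne_one _)

/-- lift adding the transposition (0 1) at the bottom -/
noncomputable def lift2 {m : ℕ} (σ : Perm (Fin m)) : Perm (Fin (m+2)) :=
  Equiv.swap 0 1 * liftSucc (liftSucc σ)

lemma lift2_zero {m : ℕ} (σ : Perm (Fin m)) : lift2 σ 0 = 1 := by
  rw [lift2, Equiv.Perm.mul_apply, liftSucc_zero, Equiv.swap_apply_left]

lemma lift2_one {m : ℕ} (σ : Perm (Fin m)) : lift2 σ 1 = 0 := by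
  rw [lift2, Equiv.Perm.mul_apply, ← Fin.succ_zero_eq_one, liftSucc_succ, liftSucc_zero,
    Fin.succ_zero_eq_one, Equiv.swap_apply_right]

lemma lift2_succsucc {m : ℕ} (σ : Perm (Fin m)) (i : Fin m) :
    lift2 σ i.succ.succ = (σ i).succ.succ := by
  rw [lift2, Equiv.Perm.mul_apply, liftSucc_succ, liftSucc_succ]
  exact Equiv.swap_apply_of_ne_of_ne (succsucc_ne_zero _) (succsucc_ne_one _)

lemma cardB (m : ℕ) :
    Nat.card {π : Perm (Fin (m+3)) // Good π ∧ π 0 = 1} = c (m+1) := by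
  rw [c_eq]
  apply Nat.card_congr
  have key : ∀ (π : Perm (Fin (m+3))), Good π → π 0 = 1 → π 1 = 0 := by
    intro π hg h0
    exact caseB_perm π hg.1 hg.2.2 h0
  refine ⟨fun x => ⟨restrict2 x.1,
      (good_iff_2 x.1 (restrict2 x.1) x.2.2 (key x.1 x.2.1 x.2.2)
        (restrict2_spec x.1 x.2.2 (key x.1 x.2.1 x.2.2))).mp x.2.1⟩,
    fun y => ⟨lift2 y.1,
      (good_iff_2 (lift2 y.1) y.1 (lift2_zero y.1) (lift2_one y.1)
        (lift2_succsucc y.1)).mpr y.2, lift2_zero y.1⟩, ?_, ?_⟩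
  · intro x
    apply Subtype.ext
    apply Equiv.ext
    intro z
    by_cases hz0 : z = 0
    · rw [hz0, lift2_zero, x.2.2]
    by_cases hz1 : z = 1
    · rw [hz1, lift2_one, key x.1 x.2.1 x.2.2]
    obtain ⟨w, rfl⟩ := exists_succsucc z hz0 hz1
    rw [lift2_succsucc, ← restrict2_spec x.1 x.2.2 (key x.1 x.2.1 x.2.2) w]
  · intro y
    apply Subtype.ext
    apply Equiv.ext
    intro i
    apply Fin.succ_injective
    apply Fin.succ_injective
    rw [← restrict2_spec (lift2 y.1) (lift2_zero y.1) (lift2_one y.1) i, lift2_succsucc]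

lemma cardC (m : ℕ) :
    Nat.card {π : Perm (Fin (m+3)) // Good π ∧ 2 ≤ (π 0).val} = (m+3) - (m+4)/2 := by
  have hcard : Nat.card (Fin ((m+3) - (m+4)/2)) = (m+3) - (m+4)/2 := by
    rw [Nat.card_eq_fintype_card, Fintype.card_fin]
  rw [← hcard]
  apply Nat.card_congr
  have hBgood : ∀ (v : ℕ) (hv : v < m+3), (m+3) ≤ 2*v → 2 ≤ v →
      Good (Bperm (m+3) v hv) ∧ 2 ≤ ((Bperm (m+3) v hv) 0).val := by
    intro v hv h2v hv2
    have hz : ((Bperm (m+3) v hv) 0).val = v := by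
      have := Bperm_zero (m+3) v hv (by omega)
      have h00 : (⟨0, by omega⟩ : Fin (m+3)) = 0 := rfl
      rwa [h00] at this
    exact ⟨⟨Bperm_av312 _ _ _, Bperm_av3214 _ _ _, Bperm_sq_av312 _ _ _ h2v⟩, by omega⟩
  refine ⟨fun x => ⟨(x.1 0).val - (m+4)/2, ?_⟩, fun k => ?_, ?_, ?_⟩
  · have h := caseC_perm x.1 x.2.1.1 x.2.1.2.1 x.2.1.2.2 x.2.2
    have := (x.1 0).isLt
    omega
  · refine ⟨Bperm (m+3) (k.val + (m+4)/2) (by have := k.isLt; omega), ?_⟩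
    have := hBgood (k.val + (m+4)/2) (by have := k.isLt; omega) (by have := k.isLt; omega)
      (by omega)
    exact ⟨this.1, this.2⟩
  · intro x
    apply Subtype.ext
    have h := caseC_perm x.1 x.2.1.1 x.2.1.2.1 x.2.1.2.2 x.2.2
    have hlt := (x.1 0).isLt
    have harg : (x.1 0).val - (m+4)/2 + (m+4)/2 = (x.1 0).val := by omega
    simp only [harg]
    exact h.2.symm
  · intro k
    apply Fin.ext
    simp only
    have hz : ((Bperm (m+3) (k.val + (m+4)/2) (by have := k.isLt; omega)) 0).val
        = k.val + (m+4)/2 := by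
      have := Bperm_zero (m+3) (k.val + (m+4)/2) (by have := k.isLt; omega) (by omega)
      have h00 : (⟨0, by omega⟩ : Fin (m+3)) = 0 := rfl
      rwa [h00] at this
    rw [hz]
    omega

lemma pi0_cases {m : ℕ} (π : Perm (Fin (m+3))) :
    (¬ π 0 = 0 ∧ ¬ π 0 = 1) ↔ 2 ≤ (π 0).val := by
  constructor
  · rintro ⟨h0, h1⟩
    have v0 : (π 0).val ≠ 0 := fun h => h0 (Fin.ext (by rw [h, Fin.val_zero]))
    have v1 : (π 0).val ≠ 1 := fun h => h1 (Fin.ext (by rw [h, Fin.val_one]))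
    omega
  · intro h
    constructor
    · intro he; rw [he] at h; simp at h
    · intro he; rw [he] at h; rw [Fin.val_one] at h; omega

lemma main_count (m : ℕ) : c (m+3) = c (m+2) + c (m+1) + ((m+3) - (m+4)/2) := by
  have s1 := nat_card_split (fun π : Perm (Fin (m+3)) => Good π) (fun π => π 0 = 0)
  have s2 := nat_card_split (fun π : Perm (Fin (m+3)) => Good π ∧ ¬ π 0 = 0)
    (fun π => π 0 = 1)
  have e2 : Nat.card {π : Perm (Fin (m+3)) // (Good π ∧ ¬ π 0 = 0) ∧ π 0 = 1}
      = Nat.card {π : Perm (Fin (m+3)) // Good π ∧ π 0 = 1} := by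
    apply Nat.card_congr
    apply Equiv.subtypeEquivRight
    intro π
    constructor
    · rintro ⟨⟨hg, _⟩, h1⟩; exact ⟨hg, h1⟩
    · rintro ⟨hg, h1⟩
      refine ⟨⟨hg, ?_⟩, h1⟩
      intro h0
      rw [h0] at h1
      have : (0 : Fin (m+3)).val = (1 : Fin (m+3)).val := congrArg Fin.val h1
      rw [Fin.val_zero, Fin.val_one] at this
      omega
  have e3 : Nat.card {π : Perm (Fin (m+3)) // (Good π ∧ ¬ π 0 = 0) ∧ ¬ π 0 = 1}
      = Nat.card {π : Perm (Fin (m+3)) // Good π ∧ 2 ≤ (π 0).val} := by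
    apply Nat.card_congr
    apply Equiv.subtypeEquivRight
    intro π
    constructor
    · rintro ⟨⟨hg, h0⟩, h1⟩
      exact ⟨hg, (pi0_cases π).mp ⟨h0, h1⟩⟩
    · rintro ⟨hg, h2⟩
      have := (pi0_cases π).mpr h2
      exact ⟨⟨hg, this.1⟩, this.2⟩
  have hA : Nat.card {π : Perm (Fin (m+3)) // Good π ∧ π 0 = 0} = c (m+2) := cardA (m+2)
  have hB := cardB m
  have hC := cardC m
  rw [c_eq (m+3)]
  omega

lemma ceil_half (n : ℕ) : ⌈(n : ℚ) / 2⌉ = ((n + 1) / 2 : ℕ) := by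
  rcases Nat.even_or_odd n with ⟨k, rfl⟩ | ⟨k, rfl⟩
  · have h : ((k + k : ℕ) : ℚ) / 2 = ((k : ℤ) : ℚ) := by push_cast; ring
    rw [h, Int.ceil_intCast]
    have : (k + k + 1) / 2 = k := by omega
    rw [this]
  · have h : ((2 * k + 1 : ℕ) : ℚ) / 2 = 1 / 2 + ((k : ℤ) : ℚ) := by push_cast; ring
    rw [h, Int.ceil_add_intCast]
    have h2 : ⌈(1 / 2 : ℚ)⌉ = 1 := by
      rw [Int.ceil_eq_iff] <;> norm_num
    rw [h2]
    have : (2 * k + 1 + 1) / 2 = k + 1 := by omega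
    rw [this]
    push_cast
    ring

end Stmt14Aux

theorem stmt14 (n : ℕ) (hn : 3 ≤ n) :
    (c n : ℤ) = c (n - 1) + c (n - 2) + n - ⌈(n : ℚ) / 2⌉ := by
  obtain ⟨m, rfl⟩ : ∃ m, n = m + 3 := ⟨n - 3, by omega⟩
  have key := Stmt14Aux.main_count m
  have h1 : m + 3 - 1 = m + 2 := by omega
  have h2 : m + 3 - 2 = m + 1 := by omega
  rw [h1, h2, Stmt14Aux.ceil_half (m + 3)]
  omega
end

section
/- For all n ≥ 1, the number of permutations π of [n] such that π avoids both patterns 312 and 2134, and π² avoids 312, equals (4k³+3k²−k)/6 + 1 if n = 2k and (4k³+9k²+5k)/6 + 1 if n = 2k+1. -/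
set_option maxHeartbeats 4000000

open Equiv Finset

def Avoids2134 {n : ℕ} (π : Equiv.Perm (Fin n)) : Prop :=
  ¬ ∃ i j l m : Fin n, i < j ∧ j < l ∧ l < m ∧ π j < π i ∧ π i < π l ∧ π l < π m

/-- value of the block permutation at position `i` -/
def bval (n a r t i : ℕ) : ℕ :=
  if i < a then i
  else if i < a + t then r + i
  else if i < a + t + r then 2*a + r + t - 1 - i
  else n - 1 + a + r + t - i

/-- inverse -/
def binv (n a r t i : ℕ) : ℕ :=
  if i < a then i
  else if i < a + r then 2*a + r + t - 1 - i
  else if i < a + r + t then i - r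
  else n - 1 + a + r + t - i

/-- validity of parameters -/
def Valid (n a r t : ℕ) : Prop := 1 ≤ t ∧ t ≤ r ∧ a + r + t ≤ n

instance (n a r t : ℕ) : Decidable (Valid n a r t) := by unfold Valid; infer_instance

lemma bval_lt {n a r t : ℕ} (h : Valid n a r t) {i : ℕ} (hi : i < n) : bval n a r t i < n := by
  obtain ⟨h1, h2, h3⟩ := h; unfold bval; split_ifs <;> omega

lemma binv_bval {n a r t : ℕ} (h : Valid n a r t) {i : ℕ} (hi : i < n) :
    binv n a r t (bval n a r t i) = i := by
  obtain ⟨h1, h2, h3⟩ := h; unfold bval binv; split_ifs <;> omega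

lemma bval_binv {n a r t : ℕ} (h : Valid n a r t) {i : ℕ} (hi : i < n) :
    bval n a r t (binv n a r t i) = i := by
  obtain ⟨h1, h2, h3⟩ := h; unfold bval binv; split_ifs <;> omega

/-- the block permutation -/
def bperm (n a r t : ℕ) : Equiv.Perm (Fin n) :=
  if h : Valid n a r t then
    { toFun := fun i => ⟨bval n a r t i.1, bval_lt h i.2⟩
      invFun := fun i => ⟨binv n a r t i.1, by
        have := bval_binv h i.2
        have h2 : binv n a r t i.1 < n := by
          obtain ⟨h1, h2, h3⟩ := h; unfold binv; split_ifs <;> omega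
        exact h2⟩
      left_inv := fun i => by ext; exact binv_bval h i.2
      right_inv := fun i => by ext; exact bval_binv h i.2 }
  else 1

lemma bperm_apply {n a r t : ℕ} (h : Valid n a r t) (i : Fin n) :
    (bperm n a r t i : Fin n).1 = bval n a r t i.1 := by
  unfold bperm; rw [dif_pos h]; rfl


lemma b312 {n a r t : ℕ} (h : Valid n a r t) (i j l : ℕ) (hij : i < j) (hjl : j < l) (hl : l < n)
    (h1 : bval n a r t j < bval n a r t l) (h2 : bval n a r t l < bval n a r t i) : False := by
  obtain ⟨h1', h2', h3'⟩ := h; unfold bval at *; split_ifs at * <;> omega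

lemma b2134 {n a r t : ℕ} (h : Valid n a r t) (i j l m : ℕ) (hij : i < j) (hjl : j < l)
    (hlm : l < m) (hm : m < n)
    (h1 : bval n a r t j < bval n a r t i) (h2 : bval n a r t i < bval n a r t l)
    (h3 : bval n a r t l < bval n a r t m) : False := by
  obtain ⟨h1', h2', h3'⟩ := h; unfold bval at *; split_ifs at * <;> omega

def sqval (n a r t i : ℕ) : ℕ :=
  if i < a then i
  else if i < a + t then 2*a + t - 1 - i
  else if i < a + r then i
  else if i < a + r + t then 2*a + 2*r + t - 1 - i
  else i

lemma bsq {n a r t : ℕ} (h : Valid n a r t) (i : ℕ) (hi : i < n) :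
    bval n a r t (bval n a r t i) = sqval n a r t i := by
  obtain ⟨h1', h2', h3'⟩ := h; unfold bval sqval; split_ifs <;> omega

lemma bsq312 {n a r t : ℕ} (h : Valid n a r t) (i j l : ℕ) (hij : i < j) (hjl : j < l)
    (hl : l < n)
    (h1 : sqval n a r t j < sqval n a r t l) (h2 : sqval n a r t l < sqval n a r t i) : False := by
  obtain ⟨h1', h2', h3'⟩ := h; unfold sqval at *; split_ifs at * <;> omega

lemma forward_aux (n : ℕ) (P Pos : ℕ → ℕ)
    (hPlt : ∀ i, i < n → P i < n) (hPoslt : ∀ v, v < n → Pos v < n)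
    (hPP : ∀ i, i < n → Pos (P i) = i) (hPPos : ∀ v, v < n → P (Pos v) = v)
    (h312 : ∀ i j l, i < j → j < l → l < n → P j < P l → P l < P i → False)
    (h2134 : ∀ i j l m, i < j → j < l → l < m → m < n → P j < P i → P i < P l → P l < P m → False)
    (hstar : ∀ u v w, u < n → v < n → w < n → Pos u < Pos v → Pos v < Pos w →
      P v < P w → P w < P u → False)
    (a : ℕ) (han : a < n) (ha : a < P a) (hmin : ∀ i, i < a → P i = i) :
    ∃ r t, Valid n a r t ∧ ∀ i, i < n → P i = bval n a r t i := by
  -- injectivity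
  have hPinj : ∀ i j, i < n → j < n → P i = P j → i = j := by
    intro i j hi hj h
    have := hPP i hi; have := hPP j hj; rw [h] at *; omega
  have hPosinj : ∀ u v, u < n → v < n → Pos u = Pos v → u = v := by
    intro u v hu hv h
    have := hPPos u hu; have := hPPos v hv; rw [h] at *; omega
  set R := P a with hR
  have hRn : R < n := hPlt a han
  have hfixPos : ∀ v, v < a → Pos v = v := by
    intro v hv
    have h1 := hmin v hv
    have := hPP v (by omega)
    rw [h1] at this; exact this
  have hPge : ∀ i, a ≤ i → i < n → a ≤ P i := by
    intro i hai hin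
    by_contra hc; push_neg at hc
    have h1 := hfixPos (P i) hc
    have h2 := hPP i hin
    omega
  have hPosge : ∀ v, a ≤ v → v < n → a ≤ Pos v := by
    intro v hav hvn
    by_contra hc; push_neg at hc
    have h1 := hmin (Pos v) hc
    have h2 := hPPos v hvn
    omega
  have hPosR : Pos R = a := hPP a han
  -- smalls descend
  have hF1 : ∀ j l, a ≤ j → j < l → l < n → P j < R → P l < R → P l < P j := by
    intro j l haj hjl hln hj hl
    have hja : a < j := by
      have : j ≠ a := by intro h; subst h; omega
      omega
    by_contra hc; push_neg at hc
    have : P j < P l := by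
      rcases Nat.eq_or_lt_of_le hc with h | h
      · exact absurd (hPinj l j (by omega) (by omega) h.symm) (by omega)
      · exact h
    exact h312 a j l hja hjl hln this hl
  have hFsd : ∀ u v, a ≤ u → u < v → v < R → Pos v < Pos u := by
    intro u v hau huv hvR
    by_contra hc; push_neg at hc
    have hne : Pos u ≠ Pos v := fun h => by
      have := hPosinj u v (by omega) (by omega) h; omega
    have h1 : Pos u < Pos v := by omega
    have := hF1 (Pos u) (Pos v) (hPosge u (by omega) (by omega)) h1 (hPoslt v (by omega))
      (by rw [hPPos u (by omega)]; omega) (by rw [hPPos v (by omega)]; omega)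
    rw [hPPos u (by omega), hPPos v (by omega)] at this; omega
  have hMono : ∀ u v, a ≤ u → u ≤ v → v < R → Pos v + (v - u) ≤ Pos u := by
    have key : ∀ d u, a ≤ u → u + d < R → Pos (u + d) + d ≤ Pos u := by
      intro d
      induction d with
      | zero => intro u _ _; simp
      | succ k ih =>
        intro u hu hud
        have h1 := ih (u+1) (by omega) (by omega)
        have h2 := hFsd u (u+1) hu (by omega) (by omega)
        have : u + (k+1) = (u+1) + k := by omega
        rw [this]; omega
    intro u v hau huv hvR
    have := key (v - u) u hau (by omega)
    have h : u + (v - u) = v := by omega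
    rw [h] at this; exact this
  set T := Pos (R - 1) with hT
  have hTn : T < n := hPoslt _ (by omega)
  have hPT : P T = R - 1 := hPPos _ (by omega)
  have hTa : a < T := by
    have h1 := hPosge (R-1) (by omega) (by omega)
    have : T ≠ a := by
      intro h
      have : P T = R := by rw [h]
      omega
    omega
  have hsmallpos : ∀ v, a ≤ v → v < R → T ≤ Pos v := by
    intro v hav hvR
    rcases Nat.eq_or_lt_of_le (Nat.le_of_lt_succ (by omega : v < (R-1)+1)) with h | h
    · rw [h]
    · exact le_of_lt (hFsd v (R-1) hav (by omega) (by omega))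
  have hprefixBig : ∀ i, a < i → i < T → R < P i := by
    intro i hai hiT
    have h1 := hPge i (by omega) (by omega)
    have h2 : P i ≠ R := fun h => by
      have := hPinj i a (by omega) han (by rw [h])
      omega
    by_contra hc; push_neg at hc
    have h3 : P i < R := by omega
    have := hsmallpos (P i) (by omega) h3
    rw [hPP i (by omega)] at this; omega
  have hposA_ge : T + (R - 1 - a) ≤ Pos a := by
    have := hMono a (R-1) (le_refl a) (by omega) (by omega)
    omega
  by_cases hGood : Pos a = T + (R - 1 - a)
  · -- GOOD case
    have hG0 : ∀ v, a ≤ v → v < R → Pos v = T + (R - 1 - v) := by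
      intro v hav hvR
      have h1 := hMono v (R-1) hav (by omega) (by omega)
      have h2 := hMono a v (le_refl a) hav hvR
      omega
    have hG0' : ∀ i, T ≤ i → i < T + (R - a) → P i = T + R - 1 - i := by
      intro i hTi hiW
      have h1 := hG0 (T + R - 1 - i) (by omega) (by omega)
      have h2 : Pos (T + R - 1 - i) = i := by omega
      have := hPPos (T + R - 1 - i) (by omega)
      rw [h2] at this; omega
    set W := T + (R - a) with hW
    have hWn : W ≤ n := by
      have := hPoslt a han; omega
    have hG1 : ∀ i, W ≤ i → i < n → R < P i := by
      intro i hWi hin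
      have h1 := hPge i (by omega) hin
      have h2 : P i ≠ R := fun h => by
        have := hPinj i a (by omega) han (by rw [h]); omega
      by_contra hc; push_neg at hc
      have h3 := hG0 (P i) (by omega) (by omega)
      have h4 := hPP i (by omega)
      omega
    have hG2 : ∀ j l, W ≤ j → j < l → l < n → P l < P j := by
      intro j l hWj hjl hln
      by_contra hc; push_neg at hc
      have hne : P j ≠ P l := fun h => by
        have := hPinj j l (by omega) (by omega) h; omega
      exact h2134 a T j l hTa (by omega) hjl hln (by omega) (hG1 j hWj (by omega)) (by omega)
    have hG3 : ∀ p l, a < p → p < T → W ≤ l → l < n → P p < P l := by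
      intro p l hap hpT hWl hln
      by_contra hc; push_neg at hc
      have hne : P l ≠ P p := fun h => by
        have := hPinj l p (by omega) (by omega) h; omega
      exact h312 p T l hpT (by omega) hln (by rw [hPT]; have := hG1 l hWl hln; omega) (by omega)
    have hG4 : ∀ i, W ≤ i → i < n → P i = n - 1 + W - i := by
      intro i hWi hin
      have hRn1 : R < n - 1 := by
        have := hG1 W (le_refl W) (by omega)
        have := hPlt W (by omega); omega
      have hPW : P W = n - 1 := by
        have hp := hPP (Pos (n-1)) (hPoslt (n-1) (by omega))
        set p := Pos (n-1) with hpdef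
        have hpn : p < n := hPoslt (n-1) (by omega)
        have hpv : P p = n - 1 := hPPos (n-1) (by omega)
        have hpa : a < p := by
          have h1 := hPosge (n-1) (by omega) (by omega)
          have : p ≠ a := fun h => by rw [h] at hpv; omega
          omega
        have hp1 : ¬ (p < T) := fun h => by
          have := hG3 p W hpa h (le_refl W) (by omega)
          have := hPlt W (by omega); omega
        have hp2 : ¬ (p < W) := fun h => by
          have := hG0' p (by omega) (by omega); omega
        have hp3 : p = W := by
          by_contra h
          have := hG2 W p (le_refl W) (by omega) hpn
          have := hPlt W (by omega); omega
        rw [hp3] at hpv; exact hpv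
      -- upper bound by descending induction
      have hupper : ∀ d, W + d < n → P (W + d) ≤ n - 1 - d := by
        intro d
        induction d with
        | zero => intro _; simp; omega
        | succ k ih =>
          intro hd
          have h1 := ih (by omega)
          have h2 := hG2 (W + k) (W + k + 1) (by omega) (by omega) (by omega)
          have : W + (k+1) = W + k + 1 := by omega
          rw [this]; omega
      -- lower bound by pigeonhole
      have hlower : n - 1 - P i ≤ i - W := by
        have hmaps : ∀ v ∈ Finset.Ioo (P i) n, Pos v ∈ Finset.Ico W i := by
          intro v hv
          simp only [Finset.mem_Ioo] at hv
          simp only [Finset.mem_Ico]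
          obtain ⟨hv1, hv2⟩ := hv
          have hRi := hG1 i hWi hin
          have hpn : Pos v < n := hPoslt v hv2
          have hpv : P (Pos v) = v := hPPos v hv2
          have hpa : a < Pos v := by
            have h1 := hPosge v (by omega) hv2
            have : Pos v ≠ a := fun h => by rw [h] at hpv; omega
            omega
          have hp1 : ¬ (Pos v < T) := fun h => by
            have := hG3 (Pos v) i hpa h hWi hin; omega
          have hp2 : ¬ (Pos v < W) := fun h => by
            have := hG0' (Pos v) (by omega) (by omega); omega
          have hp3 : Pos v ≠ i := fun h => by rw [h] at hpv; omega
          have hp4 : ¬ (i < Pos v) := fun h => by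
            have := hG2 i (Pos v) hWi h hpn; omega
          omega
        have hinj : Set.InjOn Pos (Finset.Ioo (P i) n) := by
          intro u hu v hv h
          simp only [Finset.coe_Ioo, Set.mem_Ioo] at hu hv
          exact hPosinj u v (by omega) (by omega) h
        have := Finset.card_le_card_of_injOn Pos hmaps hinj
        simp [Nat.card_Ioo, Nat.card_Ico] at this
        omega
      have := hupper (i - W) (by omega)
      have heq : W + (i - W) = i := by omega
      rw [heq] at this
      omega
    have hG5 : ∀ p, a < p → p < T → R < P p ∧ P p < W := by
      intro p hap hpT
      refine ⟨hprefixBig p hap hpT, ?_⟩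
      by_cases hWlt : W < n
      · have h1 := hG3 p (n-1) hap hpT (by omega) (by omega)
        have h2 := hG4 (n-1) (by omega) (by omega)
        omega
      · have := hPlt p (by omega); omega
    have hG6 : T ≤ R := by
      by_contra hc; push_neg at hc
      -- R < T, use star (R, W-1, a)
      have hRT : R < T := hc
      have hWR : R < W - 1 := by omega
      have hWn1 : W - 1 < n := by omega
      set p := Pos (W - 1) with hpdef
      have hpn : p < n := hPoslt _ hWn1
      have hpv : P p = W - 1 := hPPos _ hWn1
      have hpa : a < p := by
        have h1 := hPosge (W-1) (by omega) hWn1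
        have : p ≠ a := fun h => by rw [h] at hpv; omega
        omega
      have hpT2 : p < T := by
        by_contra h; push_neg at h
        by_cases h2 : p < W
        · have := hG0' p h h2; omega
        · have := hG4 p (by omega) hpn; omega
      refine hstar R (W-1) a hRn hWn1 (by omega) ?_ ?_ ?_ ?_
      · rw [hPosR, ← hpdef]; omega
      · rw [← hpdef, hGood]; omega
      · -- P (W-1) < P a
        have : P (W - 1) = a := by
          have := hG0' (W-1) (by omega) (by omega); omega
        rw [this, ← hR]; omega
      · -- P a < P R
        have := hprefixBig R (by omega) hRT
        omega
    have hG7 : ∀ i z, a < i → i < z → z < T → P i < P z := by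
      intro i z hai hiz hzT
      by_contra hcon; push_neg at hcon
      have hne : P z ≠ P i := fun h => by
        have := hPinj z i (by omega) (by omega) h; omega
      have hzi : P z < P i := by omega
      have hi5 := hG5 i hai (by omega)
      have hz5 := hG5 z (by omega) hzT
      have hPPi : P (P i) = T + R - 1 - P i := hG0' (P i) (by omega) (by omega)
      have hPPz : P (P z) = T + R - 1 - P z := hG0' (P z) (by omega) (by omega)
      have hPR : P R = T - 1 := by
        have := hG0' R (by omega) (by omega); omega
      refine hstar R (P i) (P z) hRn (by omega) (by omega) ?_ ?_ ?_ ?_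
      · rw [hPosR, hPP i (by omega)]; omega
      · rw [hPP i (by omega), hPP z (by omega)]; omega
      · omega
      · omega
    have hG8 : ∀ i, a ≤ i → i < T → P i = R + (i - a) := by
      have hlow : ∀ d, a + d < T → R + d ≤ P (a + d) := by
        intro d
        induction d with
        | zero => intro _; simp only [Nat.add_zero]; omega
        | succ k ih =>
          intro hd
          rcases Nat.eq_zero_or_pos k with h | h
          · subst h
            have := hprefixBig (a+1) (by omega) (by omega)
            have e0 : a + (0 + 1) = a + 1 := by omega
            rw [e0]; omega
          · have h1 := ih (by omega)
            have h2 := hG7 (a + k) (a + k + 1) (by omega) (by omega) (by omega)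
            have : a + (k+1) = a + k + 1 := by omega
            rw [this]; omega
      have hhigh : ∀ d, a + d < T → P (T - 1 - d) ≤ W - 1 - d := by
        intro d
        induction d with
        | zero =>
          intro hd; simp only [Nat.sub_zero]
          rcases Nat.lt_or_ge (a+1) T with h | h
          · have := hG5 (T-1) (by omega) (by omega); omega
          · have hTa1 : T = a + 1 := by omega
            have : T - 1 = a := by omega
            rw [this]; omega
        | succ k ih =>
          intro hd
          have h1 := ih (by omega)
          rcases Nat.lt_or_ge (T - 1 - (k+1)) (a + 1) with h | h
          · -- T - 1 - (k+1) ≤ a, i.e. it's a itself or below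
            rcases Nat.eq_or_lt_of_le (by omega : T - 1 - (k+1) ≤ a) with he | hlt
            · rw [he]; omega
            · have := hmin _ hlt; omega
          · have h2 := hG7 (T - 1 - (k+1)) (T - 1 - k) (by omega) (by omega) (by omega)
            omega
      intro i hai hiT
      rcases Nat.eq_or_lt_of_le hai with h | h
      · subst h; omega
      · have h1 := hlow (i - a) (by omega)
        have h2 := hhigh (T - 1 - i) (by omega)
        have e1 : a + (i - a) = i := by omega
        have e2 : T - 1 - (T - 1 - i) = i := by omega
        rw [e1] at h1; rw [e2] at h2
        omega
    refine ⟨R - a, T - a, ⟨by omega, by omega, by omega⟩, ?_⟩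
    intro i hin
    unfold bval
    split_ifs with c1 c2 c3
    · exact hmin i c1
    · have := hG8 i (by omega) (by omega); omega
    · have := hG0' i (by omega) (by omega); omega
    · have := hG4 i (by omega) hin; omega
  · -- BAD case
    exfalso
    have hPA : T + (R - 1 - a) < Pos a := by omega
    have hPan : Pos a < n := hPoslt a han
    have hPav : P (Pos a) = a := hPPos a han
    -- A1: exists big position strictly between T and Pos a
    have hA1 : ∃ g, T < g ∧ g < Pos a ∧ R < P g := by
      by_contra hcon; push_neg at hcon
      have hsub : ∀ i ∈ Finset.Icc T (Pos a), P i ∈ Finset.Ico a R := by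
        intro i hi
        simp only [Finset.mem_Icc] at hi
        simp only [Finset.mem_Ico]
        obtain ⟨hi1, hi2⟩ := hi
        have hin : i < n := by omega
        refine ⟨hPge i (by omega) hin, ?_⟩
        rcases Nat.eq_or_lt_of_le hi1 with h | h
        · rw [← h, hPT]; omega
        · rcases Nat.eq_or_lt_of_le hi2 with h2 | h2
          · rw [h2, hPav]; omega
          · have h3 := hcon i h h2
            have h4 : P i ≠ R := fun hh => by
              have := hPinj i a hin han (by rw [hh]); omega
            omega
      have hinj : Set.InjOn P (Finset.Icc T (Pos a)) := by
        intro u hu v hv h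
        simp only [Finset.coe_Icc, Set.mem_Icc] at hu hv
        exact hPinj u v (by omega) (by omega) h
      have := Finset.card_le_card_of_injOn P hsub hinj
      simp [Nat.card_Icc, Nat.card_Ico] at this
      omega
    have hXex : ∃ x, T < x ∧ x < n ∧ R < P x := by
      obtain ⟨g, h1, h2, h3⟩ := hA1; exact ⟨g, h1, by omega, h3⟩
    obtain ⟨X, ⟨hX1, hX2, hX3⟩, hXmin⟩ :
        ∃ x, (T < x ∧ x < n ∧ R < P x) ∧ ∀ i, i < x → ¬(T < i ∧ i < n ∧ R < P i) :=
      ⟨Nat.find hXex, Nat.find_spec hXex, fun i hi => Nat.find_min hXex hi⟩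
    have hXPa : X < Pos a := by
      obtain ⟨g, h1, h2, h3⟩ := hA1
      by_contra hcc; push_neg at hcc
      rcases Nat.lt_or_ge g X with h | h
      · exact hXmin g h ⟨h1, by omega, h3⟩
      · omega
    have hmidsmall : ∀ i, T ≤ i → i < X → P i < R := by
      intro i hTi hiX
      rcases Nat.eq_or_lt_of_le hTi with h | h
      · rw [← h, hPT]; omega
      · have h2 := hXmin i hiX
        simp only [not_and, not_lt] at h2
        have h2' := h2 h (by omega)
        have h3 : P i ≠ R := fun hh => by
          have := hPinj i a (by omega) han (by rw [hh]); omega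
        omega
    have hYex : ∃ y, X < y ∧ y < n ∧ P y < R := by
      exact ⟨Pos a, hXPa, hPan, by rw [hPav]; omega⟩
    obtain ⟨Y, ⟨hY1, hY2, hY3⟩, hYmin⟩ :
        ∃ y, (X < y ∧ y < n ∧ P y < R) ∧ ∀ i, i < y → ¬(X < i ∧ i < n ∧ P i < R) :=
      ⟨Nat.find hYex, Nat.find_spec hYex, fun i hi => Nat.find_min hYex hi⟩
    have hYPa : Y ≤ Pos a := by
      by_contra hcc; push_neg at hcc
      exact hYmin (Pos a) hcc ⟨hXPa, hPan, by rw [hPav]; omega⟩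
    have hmidBig : ∀ i, X ≤ i → i < Y → R < P i := by
      intro i hXi hiY
      rcases Nat.eq_or_lt_of_le hXi with h | h
      · rw [← h]; exact hX3
      · have h2 := hYmin i hiY
        simp only [not_and, not_lt] at h2
        have h2' := h2 h (by omega)
        have h3 : P i ≠ R := fun hh => by
          have := hPinj i a (by omega) han (by rw [hh]); omega
        omega
    by_cases hBr : ∃ l, Y < l ∧ l < n ∧ R < P l
    · -- Branch 1
      obtain ⟨l, hl1, hl2, hl3⟩ := hBr
      have hPlX : P l < P X := by
        by_contra hcc; push_neg at hcc
        have hne : P l ≠ P X := fun h => by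
          have := hPinj l X hl2 (by omega) h; omega
        exact h2134 a T X l hTa hX1 (by omega) hl2 (by rw [hPT]; omega) (by omega) (by omega)
      exact h312 X Y l hY1 hl1 hl2 (by omega) hPlX
    · -- Branch 2
      push_neg at hBr
      have hAfter : ∀ l, Y < l → l < n → P l < R := by
        intro l h1 h2
        have h3 := hBr l h1 h2
        have h4 : P l ≠ R := fun hh => by
          have := hPinj l a h2 han (by rw [hh]); omega
        omega
      have hposa : Pos a = n - 1 := by
        by_contra hcc
        have h1 : Pos a < n - 1 := by omega
        have h2 : P (n-1) < R := hAfter (n-1) (by omega) (by omega)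
        have h3 := hF1 (Pos a) (n-1) (hPosge a (le_refl a) han) h1 (by omega)
          (by rw [hPav]; omega) h2
        rw [hPav] at h3
        have := hPge (n-1) (by omega) (by omega)
        omega
      -- trailing block values
      have htrail : ∀ i, Y ≤ i → i < n → P i = a + (n - 1 - i) := by
        have hlow : ∀ d, d < n - Y → a + d ≤ P (n - 1 - d) := by
          intro d
          induction d with
          | zero =>
            intro _; simp only [Nat.sub_zero]
            have : n - 1 = Pos a := by omega
            rw [this, hPav]; omega
          | succ k ih =>
            intro hd
            have h1 := ih (by omega)
            have hsm1 : P (n - 1 - (k+1)) < R := by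
              rcases Nat.eq_or_lt_of_le (by omega : Y ≤ n - 1 - (k+1)) with h | h
              · rw [← h]; exact hY3
              · exact hAfter _ h (by omega)
            have hsm2 : P (n - 1 - k) < R := by
              rcases Nat.eq_or_lt_of_le (by omega : Y ≤ n - 1 - k) with h | h
              · rw [← h]; exact hY3
              · exact hAfter _ h (by omega)
            have h2 := hF1 (n - 1 - (k+1)) (n - 1 - k) (by omega)
              (by omega) (by omega) hsm1 hsm2
            omega
        intro i hYi hin
        have hsm : P i < R := by
          rcases Nat.eq_or_lt_of_le hYi with h | h
          · rw [← h]; exact hY3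
          · exact hAfter i h hin
        have hup := hMono a (P i) (le_refl a) (hPge i (by omega) hin) hsm
        rw [hPP i hin] at hup
        have h1 := hlow (n - 1 - i) (by omega)
        have e : n - 1 - (n - 1 - i) = i := by omega
        rw [e] at h1
        omega
      -- top small block values
      have htop : ∀ i, T ≤ i → i < X → P i = R - 1 - (i - T) := by
        have hupp : ∀ d, T + d < X → P (T + d) ≤ R - 1 - d := by
          intro d
          induction d with
          | zero => intro _; simp only [Nat.add_zero]; rw [hPT]; omega
          | succ k ih =>
            intro hd
            have h1 := ih (by omega)
            have h2 := hF1 (T + k) (T + k + 1) (by omega) (by omega) (by omega)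
              (hmidsmall _ (by omega) (by omega)) (hmidsmall _ (by omega) (by omega))
            have e : T + (k+1) = T + k + 1 := by omega
            rw [e]; omega
        intro i hTi hiX
        have h1 := hupp (i - T) (by omega)
        have e : T + (i - T) = i := by omega
        rw [e] at h1
        have h2 := hMono (P i) (R-1) (hPge i (by omega) (by omega)) (by omega) (by omega)
        rw [hPP i (by omega)] at h2
        omega
      -- c + e = R - a
      have hce : (X - T) + (n - Y) = R - a := by
        have hle1 : (X - T) + (n - Y) ≤ R - a := by
          have hmaps : ∀ i ∈ Finset.Ico T X ∪ Finset.Ico Y n, P i ∈ Finset.Ico a R := by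
            intro i hi
            simp only [Finset.mem_union, Finset.mem_Ico] at hi
            simp only [Finset.mem_Ico]
            rcases hi with ⟨h1, h2⟩ | ⟨h1, h2⟩
            · exact ⟨hPge i (by omega) (by omega), by have := hmidsmall i h1 h2; omega⟩
            · refine ⟨hPge i (by omega) h2, ?_⟩
              rcases Nat.eq_or_lt_of_le h1 with h | h
              · rw [← h]; exact hY3
              · exact hAfter i h h2
          have hinj : Set.InjOn P (↑(Finset.Ico T X ∪ Finset.Ico Y n)) := by
            intro u hu v hv h
            simp only [Finset.coe_union, Set.mem_union, Finset.coe_Ico, Set.mem_Ico] at hu hv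
            have hun : u < n := by rcases hu with h'|h' <;> omega
            have hvn : v < n := by rcases hv with h'|h' <;> omega
            exact hPinj u v hun hvn h
          have hcard := Finset.card_le_card_of_injOn P hmaps hinj
          have hdisj : Disjoint (Finset.Ico T X) (Finset.Ico Y n) := by
            rw [Finset.disjoint_left]
            intro i hi1 hi2
            simp only [Finset.mem_Ico] at hi1 hi2
            omega
          rw [Finset.card_union_of_disjoint hdisj] at hcard
          simp [Nat.card_Ico] at hcard
          omega
        have hle2 : R - a ≤ (X - T) + (n - Y) := by
          have hmaps : ∀ v ∈ Finset.Ico a R, Pos v ∈ Finset.Ico T X ∪ Finset.Ico Y n := by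
            intro v hv
            simp only [Finset.mem_Ico] at hv
            simp only [Finset.mem_union, Finset.mem_Ico]
            have hvn : v < n := by omega
            have h1 := hsmallpos v hv.1 hv.2
            have h2 := hPoslt v hvn
            have h3 : ¬ (X ≤ Pos v ∧ Pos v < Y) := by
              rintro ⟨ha1, ha2⟩
              have := hmidBig (Pos v) ha1 ha2
              rw [hPPos v hvn] at this; omega
            omega
          have hinj : Set.InjOn Pos (↑(Finset.Ico a R)) := by
            intro u hu v hv h
            simp only [Finset.coe_Ico, Set.mem_Ico] at hu hv
            exact hPosinj u v (by omega) (by omega) h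
          have hcard := Finset.card_le_card_of_injOn Pos hmaps hinj
          have hdisj : Disjoint (Finset.Ico T X) (Finset.Ico Y n) := by
            rw [Finset.disjoint_left]
            intro i hi1 hi2
            simp only [Finset.mem_Ico] at hi1 hi2
            omega
          rw [Finset.card_union_of_disjoint hdisj] at hcard
          simp [Nat.card_Ico] at hcard
          omega
        omega
      have hRn1 : R < n - 1 := by
        have := hPlt X hX2; omega
      -- P X = n - 1
      have hPX : P X = n - 1 := by
        set p := Pos (n-1) with hpdef
        have hpn : p < n := hPoslt _ (by omega)
        have hpv : P p = n - 1 := hPPos _ (by omega)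
        have hpa : a < p := by
          have h1 := hPosge (n-1) (by omega) (by omega)
          have : p ≠ a := fun h => by rw [h] at hpv; omega
          omega
        have hp1 : ¬ (p < T) := by
          intro h
          by_cases hq : P X = n - 1
          · have : p = X := by
              have := hPP X (by omega); rw [hq] at this; omega
            omega
          · exact h312 p T X h hX1 hX2 (by rw [hPT]; omega)
              (by rw [hpv]; have := hPlt X hX2; omega)
        have hp2 : ¬ (T ≤ p ∧ p < X) := by
          rintro ⟨h1, h2⟩
          have := hmidsmall p h1 h2; omega
        have hp3 : ¬ (X < p ∧ p < Y) := by
          rintro ⟨h1, h2⟩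
          have hne : P X ≠ n - 1 := fun hh => by
            have := hPP X hX2; rw [hh] at this; omega
          exact h2134 a T X p hTa hX1 h1 hpn (by rw [hPT]; omega) (by omega)
            (by rw [hpv]; have := hPlt X hX2; omega)
        have hp4 : ¬ (Y ≤ p) := by
          intro h
          rcases Nat.eq_or_lt_of_le h with hh | hh
          · rw [← hh] at hpv; omega
          · have := hAfter p hh hpn; omega
        have : p = X := by omega
        rw [this] at hpv; exact hpv
      -- mid block values
      have hmiddesc : ∀ j l, X ≤ j → j < l → l < Y → P l < P j := by
        intro j l h1 h2 h3
        by_contra hcc; push_neg at hcc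
        have hne : P j ≠ P l := fun h => by
          have := hPinj j l (by omega) (by omega) h; omega
        exact h2134 a T j l hTa (by omega) h2 (by omega) (by rw [hPT]; omega)
          (by have := hmidBig j h1 (by omega); omega) (by omega)
      have hmid : ∀ i, X ≤ i → i < Y → P i = n - 1 - (i - X) := by
        have hupp : ∀ d, X + d < Y → P (X + d) ≤ n - 1 - d := by
          intro d
          induction d with
          | zero => intro _; simp only [Nat.add_zero]; rw [hPX]; omega
          | succ k ih =>
            intro hd
            have h1 := ih (by omega)
            have h2 := hmiddesc (X + k) (X + k + 1) (by omega) (by omega) (by omega)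
            have e : X + (k+1) = X + k + 1 := by omega
            rw [e]; omega
        intro i hXi hiY
        have h1 := hupp (i - X) (by omega)
        have e : X + (i - X) = i := by omega
        rw [e] at h1
        have hlower : n - 1 - P i ≤ i - X := by
          have hmaps : ∀ v ∈ Finset.Ioo (P i) n, Pos v ∈ Finset.Ico X i := by
            intro v hv
            simp only [Finset.mem_Ioo] at hv
            simp only [Finset.mem_Ico]
            obtain ⟨hv1, hv2⟩ := hv
            have hRi := hmidBig i hXi hiY
            have hpn : Pos v < n := hPoslt v hv2
            have hpv : P (Pos v) = v := hPPos v hv2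
            have hpa : a < Pos v := by
              have h1' := hPosge v (by omega) hv2
              have : Pos v ≠ a := fun h => by rw [h] at hpv; omega
              omega
            have hp1 : ¬ (Pos v < T) := by
              intro h
              exact h312 (Pos v) T i h (by omega) (by omega) (by rw [hPT]; omega)
                (by rw [hpv]; omega)
            have hp2 : ¬ (T ≤ Pos v ∧ Pos v < X) := by
              rintro ⟨h1', h2'⟩
              have := hmidsmall (Pos v) h1' h2'; omega
            have hp3 : Pos v ≠ i := fun h => by rw [h] at hpv; omega
            have hp4 : ¬ (i < Pos v ∧ Pos v < Y) := by
              rintro ⟨h1', h2'⟩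
              have := hmiddesc i (Pos v) hXi h1' h2'; omega
            have hp5 : ¬ (Y ≤ Pos v) := by
              intro h
              rcases Nat.eq_or_lt_of_le h with hh | hh
              · rw [← hh] at hpv; omega
              · have := hAfter (Pos v) hh hpn; omega
            omega
          have hinj : Set.InjOn Pos (↑(Finset.Ioo (P i) n)) := by
            intro u hu v hv h
            simp only [Finset.coe_Ioo, Set.mem_Ioo] at hu hv
            exact hPosinj u v (by omega) (by omega) h
          have := Finset.card_le_card_of_injOn Pos hmaps hinj
          simp [Nat.card_Ioo, Nat.card_Ico] at this
          omega
        omega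
      -- prefix upper bound
      have hprefUB : ∀ p, a < p → p < T → P p < T + (R - a) := by
        intro p hap hpT
        have hY1X : X ≤ Y - 1 := by omega
        have hPY1 : P (Y-1) = n - 1 - (Y - 1 - X) := hmid (Y-1) hY1X (by omega)
        have hlt : P p < P (Y-1) := by
          by_contra hcc; push_neg at hcc
          have hne : P (Y-1) ≠ P p := fun h => by
            have := hPinj (Y-1) p (by omega) (by omega) h; omega
          exact h312 p T (Y-1) hpT (by omega) (by omega)
            (by rw [hPT]; have := hmidBig (Y-1) hY1X (by omega); omega) (by omega)
        omega
      -- Final witnesses via hstar; common pieces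
      have hPosN1 : Pos (n-1) = X := by
        have := hPP X hX2; rw [hPX] at this; exact this
      have hPN1 : P (n-1) = a := by
        have := htrail (n-1) (by omega) (by omega); omega
      have hXn1 : X < n - 1 := by omega
      -- case analysis on witnesses
      by_cases hc1 : R < T
      · -- u = R, prefix
        exact hstar R (n-1) a hRn (by omega) (by omega)
          (by rw [hPosR, hPosN1]; omega) (by rw [hPosN1, hposa]; omega)
          (by rw [hPN1]; omega)
          (by have := hprefixBig R (by omega) hc1; omega)
      by_cases hc2 : X ≤ R ∧ R < Y
      · -- u = R, mid
        have hPR : P R = n - 1 - (R - X) := hmid R hc2.1 hc2.2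
        exact hstar R (n-1) a hRn (by omega) (by omega)
          (by rw [hPosR, hPosN1]; omega) (by rw [hPosN1, hposa]; omega)
          (by rw [hPN1]; omega)
          (by omega)
      by_cases hc3 : a + (n - Y) < T
      · -- u = R - (X - T) = a + (n - Y), located at X - 1, prefix position
        have hu1 : P (X - 1) = R - (X - T) := by
          have := htop (X-1) (by omega) (by omega); omega
        have hu2 : Pos (R - (X - T)) = X - 1 := by
          have := hPP (X-1) (by omega); rw [hu1] at this; exact this
        have hu3 : R - (X - T) = a + (n - Y) := by omega
        have hu4 : R < P (a + (n - Y)) := hprefixBig (a + (n - Y)) (by omega) hc3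
        exact hstar (R - (X - T)) (n-1) a (by omega) (by omega) (by omega)
          (by rw [hu2, hPosN1]; omega) (by rw [hPosN1, hposa]; omega)
          (by rw [hPN1]; omega)
          (by rw [hu3]; omega)
      by_cases hc4 : a + (n - Y) ≤ X ∧ X < R
      · -- u = X (as a value), top small at position a + (n-Y) - 1... i.e. T + (R-1-X)
        have hi1 : T ≤ T + (R - 1 - X) := by omega
        have hi2 : T + (R - 1 - X) < X := by omega
        have hu1 : P (T + (R - 1 - X)) = X := by
          have := htop (T + (R - 1 - X)) hi1 (by omega); omega
        have hu2 : Pos X = T + (R - 1 - X) := by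
          have := hPP (T + (R - 1 - X)) (by omega); rw [hu1] at this; exact this
        exact hstar X (n-1) a (by omega) (by omega) (by omega)
          (by rw [hu2, hPosN1]; omega) (by rw [hPosN1, hposa]; omega)
          (by rw [hPN1]; omega)
          (by rw [hPX]; omega)
      · -- R4: u = X trailing, v = T trailing, w = a
        have hc5 : X < a + (n - Y) := by omega
        have hTae : T < a + (n - Y) := by omega
        have hu1 : P (n - 1 - (X - a)) = X := by
          have := htrail (n - 1 - (X - a)) (by omega) (by omega); omega
        have hu2 : Pos X = n - 1 - (X - a) := by
          have := hPP (n - 1 - (X - a)) (by omega); rw [hu1] at this; exact this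
        have hv1 : P (n - 1 - (T - a)) = T := by
          have := htrail (n - 1 - (T - a)) (by omega) (by omega); omega
        have hv2 : Pos T = n - 1 - (T - a) := by
          have := hPP (n - 1 - (T - a)) (by omega); rw [hv1] at this; exact this
        have hPTv : P T = R - 1 := hPT
        exact hstar X T a (by omega) (by omega) (by omega)
          (by rw [hu2, hv2]; omega) (by rw [hv2, hposa]; omega)
          (by rw [hPT]; omega)
          (by rw [hPX]; omega)

section Char
variable {n : ℕ}

/-- the value function of a permutation, as ℕ → ℕ -/
def PV (π : Equiv.Perm (Fin n)) (i : ℕ) : ℕ := if h : i < n then (π ⟨i, h⟩).1 else i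

lemma PV_lt (π : Equiv.Perm (Fin n)) {i : ℕ} (hi : i < n) : PV π i < n := by
  unfold PV; rw [dif_pos hi]; exact (π ⟨i, hi⟩).2

lemma PV_inv_PV (π : Equiv.Perm (Fin n)) {i : ℕ} (hi : i < n) : PV π⁻¹ (PV π i) = i := by
  unfold PV
  rw [dif_pos hi, dif_pos (π ⟨i, hi⟩).2]
  have : (⟨(π ⟨i, hi⟩).1, (π ⟨i, hi⟩).2⟩ : Fin n) = π ⟨i, hi⟩ := rfl
  rw [this, ← Equiv.Perm.mul_apply, inv_mul_cancel, Equiv.Perm.one_apply]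

lemma PV_PV_inv (π : Equiv.Perm (Fin n)) {v : ℕ} (hv : v < n) : PV π (PV π⁻¹ v) = v := by
  have := PV_inv_PV π⁻¹ hv
  rwa [inv_inv] at this

lemma h312_of (π : Equiv.Perm (Fin n)) (hA : Avoids312 π) :
    ∀ i j l, i < j → j < l → l < n → PV π j < PV π l → PV π l < PV π i → False := by
  intro i j l hij hjl hln h1 h2
  apply hA
  refine ⟨⟨i, by omega⟩, ⟨j, by omega⟩, ⟨l, hln⟩, ?_, ?_, ?_, ?_⟩
  · exact hij
  · exact hjl
  · simp only [Fin.lt_def]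
    unfold PV at h1; rw [dif_pos (by omega : j < n), dif_pos hln] at h1; exact h1
  · simp only [Fin.lt_def]
    unfold PV at h2; rw [dif_pos hln, dif_pos (by omega : i < n)] at h2; exact h2

lemma h2134_of (π : Equiv.Perm (Fin n)) (hA : Avoids2134 π) :
    ∀ i j l m, i < j → j < l → l < m → m < n →
      PV π j < PV π i → PV π i < PV π l → PV π l < PV π m → False := by
  intro i j l m hij hjl hlm hmn h1 h2 h3
  apply hA
  refine ⟨⟨i, by omega⟩, ⟨j, by omega⟩, ⟨l, by omega⟩, ⟨m, hmn⟩, hij, hjl, hlm, ?_, ?_, ?_⟩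
  all_goals simp only [Fin.lt_def]
  · unfold PV at h1; rw [dif_pos (by omega : j < n), dif_pos (by omega : i < n)] at h1; exact h1
  · unfold PV at h2; rw [dif_pos (by omega : i < n), dif_pos (by omega : l < n)] at h2; exact h2
  · unfold PV at h3; rw [dif_pos (by omega : l < n), dif_pos hmn] at h3; exact h3

lemma hstar_of (π : Equiv.Perm (Fin n)) (hA : Avoids312 (π * π)) :
    ∀ u v w, u < n → v < n → w < n → PV π⁻¹ u < PV π⁻¹ v → PV π⁻¹ v < PV π⁻¹ w →
      PV π v < PV π w → PV π w < PV π u → False := by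
  intro u v w hu hv hw h1 h2 h3 h4
  apply hA
  have key : ∀ x (hx : x < n), ((π * π) ⟨PV π⁻¹ x, PV_lt π⁻¹ hx⟩).1 = PV π x := by
    intro x hx
    have h5 : (⟨PV π⁻¹ x, PV_lt π⁻¹ hx⟩ : Fin n) = π⁻¹ ⟨x, hx⟩ := by
      apply Fin.ext
      simp only [PV, dif_pos hx]
    rw [Equiv.Perm.mul_apply, h5, ← Equiv.Perm.mul_apply (f := π) (g := π⁻¹), mul_inv_cancel, Equiv.Perm.one_apply]
    unfold PV; rw [dif_pos hx]
  refine ⟨⟨PV π⁻¹ u, PV_lt π⁻¹ hu⟩, ⟨PV π⁻¹ v, PV_lt π⁻¹ hv⟩, ⟨PV π⁻¹ w, PV_lt π⁻¹ hw⟩,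
    h1, h2, ?_, ?_⟩
  · simp only [Fin.lt_def]; rw [key v hv, key w hw]; exact h3
  · simp only [Fin.lt_def]; rw [key w hw, key u hu]; exact h4

theorem char_forward (π : Equiv.Perm (Fin n)) (h1 : Avoids312 π) (h2 : Avoids2134 π)
    (h3 : Avoids312 (π * π)) (hne : π ≠ 1) :
    ∃ a r t, Valid n a r t ∧ π = bperm n a r t := by
  have hex : ∃ i, PV π i ≠ i := by
    by_contra hc; push_neg at hc
    apply hne
    apply Equiv.ext
    intro x
    have := hc x.1
    unfold PV at this
    rw [dif_pos x.2] at this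
    exact Fin.ext this
  set a := Nat.find hex with hadef
  have haspec : PV π a ≠ a := Nat.find_spec hex
  have hamin : ∀ i, i < a → PV π i = i := by
    intro i hi
    have := Nat.find_min hex hi
    simpa using this
  have han : a < n := by
    by_contra hc; push_neg at hc
    apply haspec; unfold PV; rw [dif_neg (by omega)]
  have hPinj : ∀ i j, i < n → j < n → PV π i = PV π j → i = j := by
    intro i j hi hj h
    have hi2 := PV_inv_PV π hi
    have hj2 := PV_inv_PV π hj
    rw [h] at hi2; omega
  have ha : a < PV π a := by
    rcases Nat.lt_or_ge (PV π a) a with h | h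
    · exfalso
      have h5 := hamin (PV π a) h
      have := hPinj (PV π a) a (by omega) han h5
      omega
    · omega
  obtain ⟨r, t, hval, hP⟩ := forward_aux n (PV π) (PV π⁻¹)
    (fun i hi => PV_lt π hi) (fun v hv => PV_lt π⁻¹ hv)
    (fun i hi => PV_inv_PV π hi) (fun v hv => PV_PV_inv π hv)
    (h312_of π h1) (h2134_of π h2) (hstar_of π h3) a han ha hamin
  refine ⟨a, r, t, hval, ?_⟩
  apply Equiv.ext
  intro x
  apply Fin.ext
  rw [bperm_apply hval]
  have := hP x.1 x.2
  unfold PV at this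
  rw [dif_pos x.2] at this
  exact this

theorem char_backward_one : Avoids312 (1 : Equiv.Perm (Fin n)) ∧
    Avoids2134 (1 : Equiv.Perm (Fin n)) ∧ Avoids312 ((1 : Equiv.Perm (Fin n)) * 1) := by
  refine ⟨?_, ?_, ?_⟩
  · rintro ⟨i, j, l, hij, hjl, h1, h2⟩
    simp only [Equiv.Perm.one_apply] at h1 h2
    simp only [Fin.lt_def] at hij hjl h1 h2
    omega
  · rintro ⟨i, j, l, m, hij, hjl, hlm, h1, h2, h3⟩
    simp only [Equiv.Perm.one_apply] at h1 h2 h3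
    simp only [Fin.lt_def] at hij hjl h1
    omega
  · rintro ⟨i, j, l, hij, hjl, h1, h2⟩
    simp only [mul_one, Equiv.Perm.one_apply] at h1 h2
    simp only [Fin.lt_def] at hjl h1 h2
    omega

theorem char_backward (a r t : ℕ) (hv : Valid n a r t) :
    Avoids312 (bperm n a r t) ∧ Avoids2134 (bperm n a r t) ∧
      Avoids312 (bperm n a r t * bperm n a r t) := by
  refine ⟨?_, ?_, ?_⟩
  · rintro ⟨i, j, l, hij, hjl, h1, h2⟩
    simp only [Fin.lt_def] at hij hjl h1 h2
    rw [bperm_apply hv, bperm_apply hv] at h1 h2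
    exact b312 hv i.1 j.1 l.1 hij hjl l.2 h1 h2
  · rintro ⟨i, j, l, m, hij, hjl, hlm, h1, h2, h3⟩
    simp only [Fin.lt_def] at hij hjl hlm h1 h2 h3
    rw [bperm_apply hv, bperm_apply hv] at h1 h2 h3
    exact b2134 hv i.1 j.1 l.1 m.1 hij hjl hlm m.2 h1 h2 h3
  · rintro ⟨i, j, l, hij, hjl, h1, h2⟩
    simp only [Fin.lt_def] at hij hjl h1 h2
    have key : ∀ x : Fin n, ((bperm n a r t * bperm n a r t) x).1 = sqval n a r t x.1 := by
      intro x
      rw [Equiv.Perm.mul_apply, bperm_apply hv, ← bsq hv x.1 x.2]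
      congr 1
      exact bperm_apply hv x
    rw [key, key] at h1 h2
    exact bsq312 hv i.1 j.1 l.1 hij hjl l.2 h1 h2

end Char


def Pset (m : ℕ) : Finset (ℕ × ℕ) :=
  (range (m+1) ×ˢ range (m+1)).filter fun q => 1 ≤ q.2 ∧ q.2 ≤ q.1 ∧ q.1 + q.2 ≤ m

lemma Pset_card (m : ℕ) : (Pset m).card = m*m/4 := by
  induction m with
  | zero => decide
  | succ m ih =>
    have hsplit : Pset (m+1) = Pset m ∪ (Icc 1 ((m+1)/2)).image (fun t => (m+1-t, t)) := by
      ext ⟨r, t⟩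
      simp only [Pset, mem_union, mem_image, mem_filter, mem_product, mem_range, mem_Icc]
      constructor
      · rintro ⟨⟨hr, ht⟩, h1, h2, h3⟩
        by_cases hc : r + t ≤ m
        · exact Or.inl ⟨⟨by omega, by omega⟩, h1, h2, hc⟩
        · refine Or.inr ⟨t, ⟨h1, by omega⟩, ?_⟩
          have : m + 1 - t = r := by omega
          rw [this]
      · rintro (⟨⟨hr, ht⟩, h1, h2, h3⟩ | ⟨t', ⟨h1, h2⟩, heq⟩)
        · exact ⟨⟨by omega, by omega⟩, h1, h2, by omega⟩
        · obtain ⟨e1, e2⟩ := Prod.mk.injEq .. ▸ heq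
          constructor
          · omega
          · omega
    have hdisj : Disjoint (Pset m) ((Icc 1 ((m+1)/2)).image (fun t => (m+1-t, t))) := by
      rw [Finset.disjoint_right]
      rintro ⟨r, t⟩ hmem hmem2
      simp only [mem_image, mem_Icc] at hmem
      simp only [Pset, mem_filter, mem_product, mem_range] at hmem2
      obtain ⟨t', ⟨ha, hb⟩, heq⟩ := hmem
      obtain ⟨e1, e2⟩ := Prod.mk.injEq .. ▸ heq
      omega
    have himg : ((Icc 1 ((m+1)/2)).image (fun t => (m+1-t, t))).card = (m+1)/2 := by
      rw [Finset.card_image_of_injOn (by intro x _ y _ h; exact (Prod.mk.injEq .. ▸ h).2)]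
      simp [Nat.card_Icc]
    rw [hsplit, Finset.card_union_of_disjoint hdisj, ih, himg]
    rcases Nat.even_or_odd m with ⟨j, hj⟩ | ⟨j, hj⟩
    · subst hj
      have e1 : (j+j)*(j+j) = 4*(j*j) := by ring
      have e2 : (j+j+1)*(j+j+1) = 4*(j*j) + 4*j + 1 := by ring
      generalize j*j = s at e1 e2
      rw [e1] at *; omega
    · subst hj
      have e1 : (2*j+1)*(2*j+1) = 4*(j*j+j) + 1 := by ring
      have e2 : (2*j+1+1)*(2*j+1+1) = 4*(j*j+2*j+1) := by ring
      generalize j*j = s at e1 e2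
      omega

def Tset (n : ℕ) : Finset (ℕ × ℕ × ℕ) :=
  (range n ×ˢ range n ×ˢ range n).filter fun p => Valid n p.1 p.2.1 p.2.2

def G (n : ℕ) : ℕ := ∑ m ∈ range (n+1), m*m/4

lemma G_succ (m : ℕ) : G (m+1) = G m + (m+1)*(m+1)/4 := by
  unfold G; rw [Finset.sum_range_succ]

lemma Tset_card (n : ℕ) : (Tset n).card = G n := by
  induction n with
  | zero => decide
  | succ n ih =>
    have hsplit : Tset (n+1) = Tset n ∪ (Pset (n+1)).image (fun q => (n+1-q.1-q.2, q.1, q.2)) := by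
      ext ⟨a, r, t⟩
      simp only [Tset, mem_union, mem_image, mem_filter, mem_product, mem_range]
      simp only [Valid]
      constructor
      · rintro ⟨⟨ha, hr, ht⟩, h1, h2, h3⟩
        by_cases hc : a + r + t ≤ n
        · exact Or.inl ⟨⟨by omega, by omega, by omega⟩, h1, h2, hc⟩
        · refine Or.inr ⟨⟨r, t⟩, ?_, ?_⟩
          · simp only [Pset, mem_filter, mem_product, mem_range]
            exact ⟨⟨by omega, by omega⟩, h1, h2, by omega⟩
          · show (n+1-r-t, r, t) = (a, r, t)
            have e : n+1-r-t = a := by omega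
            rw [e]
      · rintro (⟨⟨ha, hr, ht⟩, h1, h2, h3⟩ | ⟨⟨r', t'⟩, hq, heq⟩)
        · exact ⟨⟨by omega, by omega, by omega⟩, h1, h2, by omega⟩
        · simp only [Pset, mem_filter, mem_product, mem_range] at hq
          obtain ⟨⟨hb1, hb2⟩, h1, h2, h3⟩ := hq
          have heq' : n+1-r'-t' = a ∧ r' = r ∧ t' = t := by
            simpa [Prod.ext_iff] using heq
          obtain ⟨e1, e2, e3⟩ := heq'
          subst e2; subst e3
          refine ⟨⟨by omega, by omega, by omega⟩, h1, h2, by omega⟩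
    have hdisj : Disjoint (Tset n) ((Pset (n+1)).image (fun q => (n+1-q.1-q.2, q.1, q.2))) := by
      rw [Finset.disjoint_right]
      rintro ⟨a, r, t⟩ hmem hmem2
      simp only [mem_image] at hmem
      simp only [Tset, mem_filter, mem_product, mem_range] at hmem2
      simp only [Valid] at hmem2
      obtain ⟨⟨r', t'⟩, hq, heq⟩ := hmem
      simp only [Pset, mem_filter, mem_product, mem_range] at hq
      simp only [Prod.mk.injEq] at heq
      obtain ⟨e1, e2, e3⟩ := heq
      omega
    have himg : ((Pset (n+1)).image (fun q => (n+1-q.1-q.2, q.1, q.2))).card = (Pset (n+1)).card := by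
      apply Finset.card_image_of_injOn
      rintro ⟨r, t⟩ _ ⟨r', t'⟩ _ h
      simp only [Prod.mk.injEq] at h
      obtain ⟨e1, e2, e3⟩ := h
      simp [e2, e3]
    rw [hsplit, Finset.card_union_of_disjoint hdisj, ih, himg, Pset_card]
    rw [G_succ]

lemma sq_div_odd (k : ℕ) : (2*k+1)*(2*k+1)/4 = k*k+k := by
  have e : (2*k+1)*(2*k+1) = 4*(k*k+k) + 1 := by ring
  generalize k*k = s at e
  omega

lemma sq_div_even (k : ℕ) : (2*k)*(2*k)/4 = k*k := by
  have e : (2*k)*(2*k) = 4*(k*k) := by ring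
  generalize k*k = s at e
  omega

lemma G_even (k : ℕ) : 6 * G (2*k) + k = 4*k^3 + 3*k^2 := by
  induction k with
  | zero => decide
  | succ k ih =>
    have e1 : 2*(k+1) = (2*k+1)+1 := by ring
    rw [e1, G_succ, G_succ]
    have e2 : 2*k+1+1 = 2*(k+1) := by ring
    rw [e2, sq_div_odd]
    have e3 : 2*(k+1)*(2*(k+1)) = (2*(k+1))*(2*(k+1)) := by ring
    rw [e3, sq_div_even]
    zify at ih ⊢
    linear_combination ih

lemma G_odd (k : ℕ) : 6 * G (2*k+1) = 4*k^3 + 9*k^2 + 5*k := by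
  have := G_even k
  rw [G_succ, sq_div_odd]
  zify at this ⊢
  linear_combination this


lemma mem_Tset_iff {n : ℕ} (p : ℕ × ℕ × ℕ) : p ∈ Tset n ↔ Valid n p.1 p.2.1 p.2.2 := by
  obtain ⟨a, r, t⟩ := p
  simp only [Tset, mem_filter, mem_product, mem_range]
  constructor
  · rintro ⟨_, h⟩; exact h
  · rintro ⟨h1, h2, h3⟩
    exact ⟨⟨by omega, by omega, by omega⟩, h1, h2, h3⟩

lemma bperm_ne_one {n a r t : ℕ} (hv : Valid n a r t) : bperm n a r t ≠ 1 := by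
  intro h
  obtain ⟨h1, h2, h3⟩ := hv
  have ha : a < n := by omega
  have := congrArg (fun σ : Equiv.Perm (Fin n) => (σ ⟨a, ha⟩ : Fin n).1) h
  simp only [Equiv.Perm.one_apply] at this
  rw [bperm_apply ⟨h1, h2, h3⟩] at this
  simp only [Fin.val_mk] at this
  unfold bval at this
  split_ifs at this <;> omega

def Fset (n : ℕ) : Finset (Equiv.Perm (Fin n)) :=
  insert 1 ((Tset n).image fun p => bperm n p.1 p.2.1 p.2.2)

lemma card_Fset (n : ℕ) : (Fset n).card = G n + 1 := by
  have hnotmem : (1 : Equiv.Perm (Fin n)) ∉ (Tset n).image fun p => bperm n p.1 p.2.1 p.2.2 := by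
    simp only [mem_image, not_exists]
    rintro p ⟨hp, h⟩
    exact bperm_ne_one ((mem_Tset_iff p).1 hp) h
  have hinj : Set.InjOn (fun p : ℕ × ℕ × ℕ => bperm n p.1 p.2.1 p.2.2) (Tset n) := by
    rintro ⟨a, r, t⟩ hp ⟨a', r', t'⟩ hq h
    have hvp := (mem_Tset_iff _).1 hp
    have hvq := (mem_Tset_iff _).1 hq
    simp only at h hvp hvq
    have key : ∀ i, i < n → bval n a r t i = bval n a' r' t' i := by
      intro i hi
      have := congrArg (fun σ : Equiv.Perm (Fin n) => (σ ⟨i, hi⟩ : Fin n).1) h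
      rw [bperm_apply hvp, bperm_apply hvq] at this
      exact this
    obtain ⟨hp1, hp2, hp3⟩ := hvp
    obtain ⟨hq1, hq2, hq3⟩ := hvq
    have haa : a = a' := by
      rcases lt_trichotomy a a' with hlt | heq | hlt
      · have := key a (by omega); unfold bval at this; split_ifs at this <;> omega
      · exact heq
      · have := key a' (by omega); unfold bval at this; split_ifs at this <;> omega
    subst haa
    have hrr : r = r' := by
      have := key a (by omega); unfold bval at this; split_ifs at this <;> omega
    subst hrr
    have htt : t = t' := by
      rcases lt_trichotomy t t' with hlt | heq | hlt
      · have := key (a+t) (by omega); unfold bval at this; split_ifs at this <;> omega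
      · exact heq
      · have := key (a+t') (by omega); unfold bval at this; split_ifs at this <;> omega
    subst htt
    rfl
  unfold Fset
  rw [Finset.card_insert_of_notMem hnotmem, Finset.card_image_of_injOn hinj, Tset_card]

lemma pred_iff {n : ℕ} (hn : 1 ≤ n) (π : Equiv.Perm (Fin n)) :
    (Avoids312 π ∧ Avoids2134 π ∧ Avoids312 (π * π)) ↔ π ∈ Fset n := by
  constructor
  · rintro ⟨h1, h2, h3⟩
    by_cases hne : π = 1
    · subst hne; exact Finset.mem_insert_self 1 _
    · obtain ⟨a, r, t, hv, heq⟩ := char_forward π h1 h2 h3 hne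
      apply Finset.mem_insert_of_mem
      simp only [mem_image]
      exact ⟨⟨a, r, t⟩, (mem_Tset_iff _).2 hv, heq.symm⟩
  · intro hmem
    rcases Finset.mem_insert.1 hmem with heq | hmem2
    · subst heq; exact char_backward_one
    · simp only [mem_image] at hmem2
      obtain ⟨⟨a, r, t⟩, hp, heq⟩ := hmem2
      subst heq
      exact char_backward a r t ((mem_Tset_iff _).1 hp)

theorem stmt17 (n : ℕ) (hn : 1 ≤ n) (k : ℕ) :
    (n = 2 * k →
      (Nat.card {π : Equiv.Perm (Fin n) // Avoids312 π ∧ Avoids2134 π ∧ Avoids312 (π * π)} : ℚ) =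
        (4 * k ^ 3 + 3 * k ^ 2 - k) / 6 + 1) ∧
    (n = 2 * k + 1 →
      (Nat.card {π : Equiv.Perm (Fin n) // Avoids312 π ∧ Avoids2134 π ∧ Avoids312 (π * π)} : ℚ) =
        (4 * k ^ 3 + 9 * k ^ 2 + 5 * k) / 6 + 1) := by
  have hcard : Nat.card {π : Equiv.Perm (Fin n) // Avoids312 π ∧ Avoids2134 π ∧ Avoids312 (π * π)}
      = G n + 1 := by
    rw [Nat.card_congr (Equiv.subtypeEquivRight (pred_iff hn))]
    rw [Nat.card_eq_fintype_card, Fintype.card_coe, card_Fset]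
  constructor
  · intro hnk
    subst hnk
    rw [hcard]
    have hG := G_even k
    have hGq : (6 : ℚ) * (G (2*k) : ℚ) + (k:ℚ) = 4*(k:ℚ)^3 + 3*(k:ℚ)^2 := by
      exact_mod_cast congrArg (fun x : ℕ => (x : ℚ)) hG
    push_cast
    field_simp
    linear_combination hGq
  · intro hnk
    subst hnk
    rw [hcard]
    have hG := G_odd k
    have hGq : (6 : ℚ) * (G (2*k+1) : ℚ) = 4*(k:ℚ)^3 + 9*(k:ℚ)^2 + 5*(k:ℚ) := by
      exact_mod_cast congrArg (fun x : ℕ => (x : ℚ)) hG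
    push_cast
    field_simp
    linear_combination hGq
end

section
/- For all n ≥ 1, the number of permutations π of [n] such that π avoids both patterns 312 and 2143, and π² avoids 312, equals (4k³+3k²−k)/6 + 1 if n = 2k and (4k³+9k²+5k)/6 + 1 if n = 2k+1. -/
set_option maxHeartbeats 2000000


open Equiv Finset

def Avoids2143 {n : ℕ} (π : Equiv.Perm (Fin n)) : Prop :=
  ¬ ∃ i j l m : Fin n, i < j ∧ j < l ∧ l < m ∧ π j < π i ∧ π m < π l ∧ π i < π m

namespace Stmt18Aux


def shape (a e b x : ℕ) : ℕ :=
  if x < a then x else if x ≤ e then x + (b - e) else if x ≤ b then a + b - x else x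

def shapeInv (a e b y : ℕ) : ℕ :=
  if y < a then y else if y < a + b - e then a + b - y else if y ≤ b then y - (b - e) else y

lemma shape_lt {a e b n : ℕ} (hae : a ≤ e) (heb : e < b) (hbn : b < n) {x : ℕ}
    (hx : x < n) : shape a e b x < n := by
  unfold shape; split_ifs <;> omega

lemma shapeInv_lt {a e b n : ℕ} (hae : a ≤ e) (heb : e < b) (hbn : b < n) {x : ℕ}
    (hx : x < n) : shapeInv a e b x < n := by
  unfold shapeInv; split_ifs <;> omega

lemma shapeInv_shape {a e b : ℕ} (hae : a ≤ e) (heb : e < b) (x : ℕ) :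
    shapeInv a e b (shape a e b x) = x := by
  unfold shape shapeInv; split_ifs <;> omega

lemma shape_shapeInv {a e b : ℕ} (hae : a ≤ e) (heb : e < b) (x : ℕ) :
    shape a e b (shapeInv a e b x) = x := by
  unfold shape shapeInv; split_ifs <;> omega

def shapePerm (n a e b : ℕ) (hae : a ≤ e) (heb : e < b) (hbn : b < n) :
    Equiv.Perm (Fin n) where
  toFun x := ⟨shape a e b x.1, shape_lt hae heb hbn x.2⟩
  invFun y := ⟨shapeInv a e b y.1, shapeInv_lt hae heb hbn y.2⟩
  left_inv x := Fin.ext (shapeInv_shape hae heb x.1)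
  right_inv y := Fin.ext (shape_shapeInv hae heb y.1)

@[simp] lemma shapePerm_apply {n a e b : ℕ} (hae : a ≤ e) (heb : e < b) (hbn : b < n)
    (x : Fin n) : (shapePerm n a e b hae heb hbn x : ℕ) = shape a e b x.1 := rfl

def shape2 (a e b x : ℕ) : ℕ :=
  if x < a then x else if x ≤ e then a + e - x else if x < a + b - e then x
  else if x ≤ b then a + 2 * b - (e + x) else x

lemma shape_shape {a e b : ℕ} (hae : a ≤ e) (heb : e < b) (h5 : 2 * e < a + b) (x : ℕ) :
    shape a e b (shape a e b x) = shape2 a e b x := by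
  unfold shape shape2; split_ifs <;> omega

lemma shape_avoids312 {n a e b : ℕ} (hae : a ≤ e) (heb : e < b) (hbn : b < n) :
    Avoids312 (shapePerm n a e b hae heb hbn) := by
  rintro ⟨i, j, l, h1, h2, h3, h4⟩
  rw [Fin.lt_def] at h1 h2 h3 h4
  simp only [shapePerm_apply] at h3 h4
  unfold shape at h3 h4
  split_ifs at h3 h4 <;> omega

lemma shape_avoids2143 {n a e b : ℕ} (hae : a ≤ e) (heb : e < b) (hbn : b < n) :
    Avoids2143 (shapePerm n a e b hae heb hbn) := by
  rintro ⟨i, j, l, m, h1, h2, h3, h4, h5, h6⟩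
  rw [Fin.lt_def] at h1 h2 h3 h4 h5 h6
  simp only [shapePerm_apply] at h4 h5 h6
  unfold shape at h4 h5 h6
  split_ifs at h4 h5 h6 <;> omega

lemma shape_sq_avoids312 {n a e b : ℕ} (hae : a ≤ e) (heb : e < b) (hbn : b < n)
    (h5 : 2 * e < a + b) :
    Avoids312 (shapePerm n a e b hae heb hbn * shapePerm n a e b hae heb hbn) := by
  rintro ⟨i, j, l, h1, h2, h3, h4⟩
  rw [Fin.lt_def] at h1 h2 h3 h4
  simp only [Equiv.Perm.mul_apply, shapePerm_apply, shape_shape hae heb h5] at h3 h4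
  unfold shape2 at h3 h4
  split_ifs at h3 h4 <;> omega

lemma one_avoids312 {n : ℕ} : Avoids312 (1 : Equiv.Perm (Fin n)) := by
  rintro ⟨i, j, l, h1, h2, h3, h4⟩
  rw [Fin.lt_def] at h1 h2 h3 h4
  simp only [Equiv.Perm.coe_one, id_eq] at h3 h4
  omega

lemma one_avoids2143 {n : ℕ} : Avoids2143 (1 : Equiv.Perm (Fin n)) := by
  rintro ⟨i, j, l, m, h1, h2, h3, h4, h5, h6⟩
  rw [Fin.lt_def] at h1 h2 h3 h4 h5 h6
  simp only [Equiv.Perm.coe_one, id_eq] at h4 h5 h6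
  omega



def natFun {n : ℕ} (π : Equiv.Perm (Fin n)) (x : ℕ) : ℕ :=
  if h : x < n then (π ⟨x, h⟩ : ℕ) else x

lemma natFun_eq {n : ℕ} (π : Equiv.Perm (Fin n)) {x : ℕ} (h : x < n) :
    natFun π x = (π ⟨x, h⟩ : ℕ) := dif_pos h

lemma natFun_lt {n : ℕ} (π : Equiv.Perm (Fin n)) {x : ℕ} (h : x < n) :
    natFun π x < n := by rw [natFun_eq π h]; exact (π ⟨x, h⟩).2

lemma natFun_ge {n : ℕ} (π : Equiv.Perm (Fin n)) {x : ℕ} (h : n ≤ x) :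
    natFun π x = x := dif_neg (by omega)

lemma natFun_inv_left {n : ℕ} (π : Equiv.Perm (Fin n)) (x : ℕ) :
    natFun π⁻¹ (natFun π x) = x := by
  rcases lt_or_ge x n with h | h
  · rw [natFun_eq π h, natFun_eq π⁻¹ (π ⟨x, h⟩).2]
    simp
  · rw [natFun_ge π h, natFun_ge π⁻¹ h]

lemma natFun_inv_right {n : ℕ} (π : Equiv.Perm (Fin n)) (x : ℕ) :
    natFun π (natFun π⁻¹ x) = x := by
  have := natFun_inv_left π⁻¹ x
  simpa using this

lemma natFun_mul {n : ℕ} (π : Equiv.Perm (Fin n)) (x : ℕ) :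
    natFun (π * π) x = natFun π (natFun π x) := by
  rcases lt_or_ge x n with h | h
  · rw [natFun_eq (π * π) h, natFun_eq π h, natFun_eq π (π ⟨x, h⟩).2]
    simp [Equiv.Perm.mul_apply]
  · rw [natFun_ge _ h, natFun_ge _ h, natFun_ge _ h]



theorem complete_nat (n : ℕ) (p q : ℕ → ℕ)
    (hqp : ∀ x, q (p x) = x) (hpq : ∀ x, p (q x) = x)
    (hfix : ∀ x, n ≤ x → p x = x)
    (A3 : ∀ i j l, i < j → j < l → p j < p l → p l < p i → False)
    (A4 : ∀ i j l m, i < j → j < l → l < m → p j < p i → p m < p l → p i < p m → False)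
    (AS : ∀ i j l, i < j → j < l → p (p j) < p (p l) → p (p l) < p (p i) → False)
    (hex : ∃ x, p x ≠ x) :
    ∃ a e b, a ≤ e ∧ e < b ∧ b < n ∧ 2 * e < a + b ∧ ∀ m, p m = shape a e b m := by
  classical
  have hpinj : Function.Injective p := fun x y h => by
    have := congrArg q h; rwa [hqp, hqp] at this
  obtain ⟨x₀, hx₀⟩ := id hex
  have hx₀n : x₀ < n := by
    by_contra h; exact hx₀ (hfix x₀ (by omega))
  set a := Nat.find hex with ha
  have haNF : p a ≠ a := Nat.find_spec hex
  have haMin : ∀ x, x < a → p x = x := fun x hx => not_not.1 (Nat.find_min hex hx)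
  set b := Nat.findGreatest (fun x => p x ≠ x) n with hb
  have hbNF : p b ≠ b := Nat.findGreatest_spec (P := fun x => p x ≠ x) (le_of_lt hx₀n) hx₀
  have hbMax : ∀ x, b < x → p x = x := by
    intro x hx
    rcases le_or_gt x n with h | h
    · exact not_not.1 (Nat.findGreatest_is_greatest hx h)
    · exact hfix x (by omega)
  have hbn : b < n := by
    rcases lt_or_ge b n with h | h
    · exact h
    · exact absurd (hfix b h) hbNF
  have hab0 : a ≤ b := by
    by_contra h; exact hbNF (haMin b (by omega))
  have hrange : ∀ x, a ≤ x → x ≤ b → a ≤ p x ∧ p x ≤ b := by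
    intro x hax hxb
    constructor
    · by_contra h; push_neg at h
      have h1 : p (p x) = p x := haMin _ h
      have := hpinj h1; omega
    · by_contra h; push_neg at h
      have h1 : p (p x) = p x := hbMax _ h
      have := hpinj h1; omega
  have hqrange : ∀ x, a ≤ x → x ≤ b → a ≤ q x ∧ q x ≤ b := by
    intro x hax hxb
    constructor
    · by_contra h; push_neg at h
      have h1 : p (q x) = q x := haMin _ h
      rw [hpq] at h1; omega
    · by_contra h; push_neg at h
      have h1 : p (q x) = q x := hbMax _ h
      rw [hpq] at h1; omega
  have hpa : a < p a := by
    have := (hrange a le_rfl hab0).1; omega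
  have hpb : p b < b := by
    have := (hrange b hab0 le_rfl).2; omega
  have hab : a < b := by
    rcases hab0.lt_or_eq with h | h
    · exact h
    · exfalso; rw [h] at hpa; omega
  -- F1 : p b = a
  have hF1 : p b = a := by
    by_contra hne1
    have hra := hrange b hab0 le_rfl
    have hpba : a < p b := by omega
    have hpd : p (q a) = a := hpq a
    have hdr := hqrange a le_rfl hab0
    have hda : a < q a := by
      have hdne : q a ≠ a := fun h => by rw [h] at hpd; omega
      omega
    have hdb : q a < b := by
      have : q a ≠ b := fun h => by rw [h] at hpd; exact hne1 hpd
      omega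
    rcases lt_trichotomy (p a) (p b) with hc | hc | hc
    · have hpe' : p (q b) = b := hpq b
      have he'r := hqrange b hab0 le_rfl
      have he'b : q b < b := by
        have : q b ≠ b := fun h => by rw [h] at hpe'; omega
        omega
      have he'a : a < q b := by
        have : q b ≠ a := fun h => by rw [h] at hpe'; omega
        omega
      have hde : q a ≠ q b := fun h => by rw [h] at hpd; omega
      rcases lt_or_gt_of_ne hde with h | h
      · exact A4 a (q a) (q b) b hda h he'b (by omega) (by omega) (by omega)
      · exact A3 (q b) (q a) b h hdb (by omega) (by omega)
    · exact absurd (hpinj hc) (by omega)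
    · exact A3 a (q a) b hda hdb (by omega) (by omega)
  set e := q b with he
  have hpe : p e = b := hpq b
  have her := hqrange b hab0 le_rfl
  have heb : e < b := by
    have : e ≠ b := fun h => by rw [h] at hpe; omega
    omega
  have hea : a ≤ e := her.1
  -- F2 : strictly decreasing on [e,b]
  have hF2 : ∀ x y, e ≤ x → x < y → y ≤ b → p y < p x := by
    intro x y hex' hxy hyb
    have hyr := hrange y (by omega) hyb
    have hyb' : p y < b := by
      have h1 : y ≠ e := by omega
      have : p y ≠ b := fun h => h1 (hpinj (h.trans hpe.symm))
      omega
    rcases eq_or_lt_of_le hex' with h | h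
    · rw [← h, hpe]; exact hyb'
    · by_contra hcon; push_neg at hcon
      have hne2 : p x ≠ p y := fun hh => by have := hpinj hh; omega
      exact A3 e x y h hxy (by omega) (by rw [hpe]; omega)
  have hdec : ∀ d x, e ≤ x → x + d ≤ b → p (x + d) + d ≤ p x := by
    intro d
    induction d with
    | zero => intro x _ _; simp
    | succ d ih =>
      intro x hx hxd
      have h1 := hF2 (x + d) (x + d + 1) (by omega) (by omega) (by omega)
      have h2 := ih x hx (by omega)
      rw [show x + (d + 1) = x + d + 1 from by omega]
      omega
  -- squares
  have hppinj : Function.Injective (fun x => p (p x)) := Function.Injective.comp hpinj hpinj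
  have hppe : p (p e) = a := by rw [hpe, hF1]
  have hpprange : ∀ x, a ≤ x → x ≤ b → a ≤ p (p x) ∧ p (p x) ≤ b := fun x h1 h2 => by
    have := hrange x h1 h2; exact hrange _ this.1 this.2
  have hcross : ∀ i l, a ≤ i → i < e → e < l → l ≤ b → p (p i) < p (p l) := by
    intro i l h1 h2 h3 h4
    by_contra hcon; push_neg at hcon
    have hne3 : p (p l) ≠ p (p i) := fun hh => by
      have := hpinj (hpinj hh); omega
    have hla : p (p l) ≠ a := fun hh => by
      have h5 : p (p l) = p (p e) := by rw [hppe, hh]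
      have := hpinj (hpinj h5); omega
    have hlr := hpprange l (by omega) h4
    exact AS i e l h2 h3 (by rw [hppe]; omega) (by omega)
  have hT1 : ∀ x, a ≤ x → x ≤ e → p (p x) ≤ e := by
    intro x h1 h2
    rcases eq_or_lt_of_le h2 with h | h
    · rw [h, hppe]; omega
    · by_contra hcon; push_neg at hcon
      have hmaps : ∀ y ∈ insert x (Ioc e b), p (p y) ∈ Ioc e b := by
        intro y hy
        rcases mem_insert.1 hy with rfl | hy
        · exact mem_Ioc.2 ⟨hcon, (hpprange y h1 (by omega)).2⟩
        · have hy' := mem_Ioc.1 hy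
          have := hcross x y h1 h hy'.1 hy'.2
          exact mem_Ioc.2 ⟨by omega, (hpprange y (by omega) hy'.2).2⟩
      have hcard := Finset.card_le_card_of_injOn _ hmaps hppinj.injOn
      rw [Finset.card_insert_of_notMem (by simp [mem_Ioc]; omega), Nat.card_Ioc] at hcard
      omega
  have hT2 : ∀ z, e < z → z ≤ b → e < p (p z) := by
    intro z h1 h2
    by_contra hcon; push_neg at hcon
    have hmaps : ∀ y ∈ insert z (Icc a e), p (p y) ∈ Icc a e := by
      intro y hy
      rcases mem_insert.1 hy with rfl | hy
      · exact mem_Icc.2 ⟨(hpprange y (by omega) h2).1, hcon⟩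
      · have hy' := mem_Icc.1 hy
        rcases eq_or_lt_of_le hy'.2 with h | h
        · rw [h, hppe]; exact mem_Icc.2 ⟨le_rfl, hea⟩
        · have := hcross y z hy'.1 h h1 h2
          exact mem_Icc.2 ⟨(hpprange y hy'.1 (by omega)).1, by omega⟩
    have hcard := Finset.card_le_card_of_injOn _ hmaps hppinj.injOn
    rw [Finset.card_insert_of_notMem (by simp [mem_Icc]; omega), Nat.card_Icc] at hcard
    omega
  -- G4 : all prefix values above e
  have hG4 : ∀ x, a ≤ x → x ≤ e → e < p x := by
    by_contra hcon; push_neg at hcon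
    obtain ⟨x₁, hx1a, hx1e, hx1⟩ := hcon
    set C : Finset ℕ := (Icc a e).filter (fun v => q v ≤ e) with hC
    have hmemC : ∀ v, v ∈ C ↔ (a ≤ v ∧ v ≤ e ∧ q v ≤ e) := by
      intro v; simp only [hC, mem_filter, mem_Icc]; tauto
    have hclos : ∀ v, v ∈ C → p v ∈ C := by
      intro v hv
      rw [hmemC] at hv ⊢
      obtain ⟨h1, h2, h3⟩ := hv
      have hqv_a : a ≤ q v := (hqrange v h1 (by omega)).1
      have h4 : p (p (q v)) ≤ e := hT1 (q v) hqv_a h3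
      rw [hpq] at h4
      exact ⟨(hrange v h1 (by omega)).1, h4, by rw [hqp]; exact h2⟩
    have hCa : a ∉ C := by
      rw [hmemC]; push_neg; intro _ _
      have : q a = b := by rw [← hF1, hqp]
      omega
    have hCe : e ∉ C := by
      intro h
      have := hclos e h
      rw [hmemC, hpe] at this
      omega
    have hqe : e < q e ∧ q e ≤ b := by
      have h0 := hqrange e hea (by omega)
      have h1 : ¬ (q e ≤ e) := fun h => hCe ((hmemC e).2 ⟨hea, le_rfl, h⟩)
      exact ⟨by omega, h0.2⟩
    have hpae : e < p a := by
      by_contra hcon2; push_neg at hcon2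
      have hpaC : p a ∈ C := (hmemC _).2 ⟨by omega, hcon2, by rw [hqp]; omega⟩
      have horb : ∀ m, p^[m] (p a) ∈ C := by
        intro m; induction m with
        | zero => simpa using hpaC
        | succ m ih => rw [Function.iterate_succ_apply']; exact hclos _ ih
      have hiter_mem : ∀ j, p^[j] a ∈ Icc a b := by
        intro j; induction j with
        | zero => exact mem_Icc.2 ⟨le_rfl, hab0⟩
        | succ j ih =>
          rw [Function.iterate_succ_apply']
          have h5 := mem_Icc.1 ih
          exact mem_Icc.2 (hrange _ h5.1 h5.2)
      obtain ⟨i, hi, j, hj, hij, hfij⟩ :=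
        Finset.exists_ne_map_eq_of_card_lt_of_maps_to
          (s := range (b - a + 2)) (t := Icc a b)
          (by rw [Nat.card_Icc, card_range]; omega)
          (fun i _ => hiter_mem i)
      have key : ∀ i j, i < j → p^[i] a = p^[j] a → False := by
        intro i j hij' hfeq
        have hk : p^[j - i] a = a := by
          have h6 : p^[i] (p^[j - i] a) = p^[i] a := by
            rw [← Function.iterate_add_apply]
            rw [show i + (j - i) = j by omega]
            exact hfeq.symm
          exact hpinj.iterate i h6
        have : a ∈ C := by
          have h2 : p^[j - i] a = p^[(j - i - 1) + 1] a := by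
            rw [show j - i - 1 + 1 = j - i by omega]
          rw [h2, Function.iterate_succ_apply] at hk
          rw [← hk]; exact horb (j - i - 1)
        exact hCa this
      rcases lt_or_gt_of_ne hij with h | h
      · exact key i j h hfij
      · exact key j i h hfij.symm
    have hv1C : p x₁ ∈ C :=
      (hmemC _).2 ⟨(hrange x₁ hx1a (by omega)).1, hx1, by rw [hqp]; omega⟩
    have hvC := (hmemC (p x₁)).1 hv1C
    have hpx' : p (q (p x₁)) = p x₁ := hpq _
    have hx'e : q (p x₁) ≤ e := hvC.2.2
    have hx'a : a < q (p x₁) := by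
      have h7 : q (p x₁) ≠ a := fun h => by rw [h] at hpx'; omega
      have := (hqrange (p x₁) hvC.1 (by omega)).1; omega
    have hvne : p x₁ ≠ e := fun h => hCe (h ▸ hv1C)
    exact A3 a (q (p x₁)) (q e) hx'a (by omega) (by rw [hpx', hpq]; omega)
      (by rw [hpq]; omega)
  -- F5
  have hF5 : 2 * e < a + b := by
    have hmaps : ∀ x ∈ Icc a e, p x ∈ Ioc e b := by
      intro x hx; have h := mem_Icc.1 hx
      exact mem_Ioc.2 ⟨hG4 x h.1 h.2, (hrange x h.1 (by omega)).2⟩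
    have := Finset.card_le_card_of_injOn _ hmaps hpinj.injOn
    rw [Nat.card_Icc, Nat.card_Ioc] at this
    omega
  -- prefix values dominate suffix values
  have hTS : ∀ x z, a ≤ x → x ≤ e → e < z → z ≤ b → p z < p x := by
    intro x z h1 h2 h3 h4
    have hxz : x ≠ z := by omega
    have hne4 : p x ≠ p z := fun h => hxz (hpinj h)
    by_contra hcon; push_neg at hcon
    have ht := hG4 x h1 h2
    have hs := (hrange z (by omega) h4).2
    have hF2' := hF2 (p x) (p z) (by omega) (by omega) hs
    have h5 := hT1 x h1 h2
    have h6 := hT2 z h3 h4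
    omega
  -- suffix formula
  have hsuf : ∀ z, e < z → z ≤ b → p z = a + b - z := by
    intro z h1 h2
    have hlow : p b + (b - z) ≤ p z := by
      have := hdec (b - z) z (by omega) (by omega)
      rwa [show z + (b - z) = b by omega] at this
    rw [hF1] at hlow
    have hup : z - a ≤ b - p z := by
      have hmaps : ∀ x ∈ Ico a z, p x ∈ Ioc (p z) b := by
        intro x hx; have hx' := mem_Ico.1 hx
        rcases le_or_gt x e with h | h
        · exact mem_Ioc.2 ⟨hTS x z hx'.1 h h1 h2, (hrange x hx'.1 (by omega)).2⟩
        · exact mem_Ioc.2 ⟨hF2 x z (by omega) hx'.2 h2, (hrange x hx'.1 (by omega)).2⟩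
      have := Finset.card_le_card_of_injOn _ hmaps hpinj.injOn
      rwa [Nat.card_Ico, Nat.card_Ioc] at this
    have := (hrange z (by omega) h2).1
    omega
  -- F3 : prefix increasing
  have hF3 : ∀ x y, a ≤ x → x < y → y ≤ e → p x < p y := by
    intro x y h1 h2 h3
    have hxe : x ≠ e := by omega
    have hpxb : p x < b := by
      have h4 : p x ≠ b := fun hh => hxe (hpinj (hh.trans hpe.symm))
      have := (hrange x h1 (by omega)).2; omega
    rcases eq_or_lt_of_le h3 with h | h
    · rw [h, hpe]; exact hpxb
    · by_contra hcon; push_neg at hcon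
      have hne5 : p y ≠ p x := fun hh => by have := hpinj hh; omega
      have hyx : p y < p x := by omega
      have hpI : p (a + b - e) = e := by rw [hsuf _ (by omega) (by omega)]; omega
      have hpJ : p (a + b - y) = y := by rw [hsuf _ (by omega) (by omega)]; omega
      have hpL : p (a + b - x) = x := by rw [hsuf _ (by omega) (by omega)]; omega
      exact AS (a + b - e) (a + b - y) (a + b - x) (by omega) (by omega)
        (by rw [hpJ, hpL]; omega)
        (by rw [hpL, hpI, hpe]; omega)
  have hinc : ∀ d x, a ≤ x → x + d ≤ e → p x + d ≤ p (x + d) := by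
    intro d
    induction d with
    | zero => intro x _ _; simp
    | succ d ih =>
      intro x hx hxd
      have h1 := hF3 (x + d) (x + d + 1) (by omega) (by omega) (by omega)
      have h2 := ih x hx (by omega)
      rw [show x + (d + 1) = x + d + 1 from by omega]
      omega
  -- prefix formula
  have hpre : ∀ x, a ≤ x → x ≤ e → p x = x + (b - e) := by
    intro x h1 h2
    have hup : p x + (e - x) ≤ b := by
      have := hinc (e - x) x h1 (by omega)
      rwa [show x + (e - x) = e by omega, hpe] at this
    have hmaps : ∀ y ∈ (Ico a x) ∪ (Ioc e b), p y ∈ Ico a (p x) := by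
      intro y hy
      rcases mem_union.1 hy with hy | hy
      · have hy' := mem_Ico.1 hy
        exact mem_Ico.2 ⟨(hrange y hy'.1 (by omega)).1, hF3 y x hy'.1 hy'.2 h2⟩
      · have hy' := mem_Ioc.1 hy
        exact mem_Ico.2 ⟨(hrange y (by omega) hy'.2).1, hTS x y h1 h2 hy'.1 hy'.2⟩
    have hdisj : Disjoint (Ico a x) (Ioc e b) := by
      rw [Finset.disjoint_left]; intro y hy1 hy2
      have h5 := mem_Ico.1 hy1; have h6 := mem_Ioc.1 hy2; omega
    have hcard := Finset.card_le_card_of_injOn _ hmaps hpinj.injOn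
    rw [Finset.card_union_of_disjoint hdisj, Nat.card_Ico, Nat.card_Ioc, Nat.card_Ico] at hcard
    have hax := (hrange x h1 (by omega)).1
    omega
  refine ⟨a, e, b, hea, heb, hbn, hF5, ?_⟩
  intro m
  unfold shape
  split_ifs with h1 h2 h3
  · exact haMin m h1
  · exact hpre m (by omega) h2
  · exact hsuf m (by omega) h3
  · exact hbMax m (by omega)



def M (m : ℕ) : Finset (ℕ × ℕ) :=
  (range m ×ˢ range m).filter fun ij => ij.1 ≤ ij.2 ∧ ij.1 + ij.2 < m

lemma mem_M {m : ℕ} {ij : ℕ × ℕ} : ij ∈ M m ↔ ij.1 ≤ ij.2 ∧ ij.1 + ij.2 < m := by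
  simp only [M, mem_filter, mem_product, mem_range]
  omega

def Params (n : ℕ) : Finset (ℕ × ℕ × ℕ) :=
  (range n ×ˢ range n ×ˢ range n).filter fun t =>
    t.1 ≤ t.2.1 ∧ t.2.1 < t.2.2 ∧ 2 * t.2.1 < t.1 + t.2.2

lemma mem_Params {n : ℕ} {t : ℕ × ℕ × ℕ} :
    t ∈ Params n ↔ t.1 ≤ t.2.1 ∧ t.2.1 < t.2.2 ∧ t.2.2 < n ∧ 2 * t.2.1 < t.1 + t.2.2 := by
  simp only [Params, mem_filter, mem_product, mem_range]
  omega

lemma M_zero : M 0 = ∅ := by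
  ext ij; simp [mem_M]

lemma Params_zero : Params 0 = ∅ := by
  ext t; simp [mem_Params]

lemma M_succ (m : ℕ) :
    M (m + 1) = M m ∪ (range (m / 2 + 1)).image fun i => (i, m - i) := by
  ext ⟨i, j⟩
  simp only [mem_M, mem_union, mem_image, mem_range]
  constructor
  · rintro ⟨h1, h2⟩
    rcases lt_or_ge (i + j) m with h | h
    · exact Or.inl ⟨h1, h⟩
    · exact Or.inr ⟨i, by omega, by rw [Prod.mk.injEq]; omega⟩
  · rintro (⟨h1, h2⟩ | ⟨x, hx, hx2⟩)
    · exact ⟨h1, by omega⟩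
    · rw [Prod.mk.injEq] at hx2; omega
lemma M_succ_card (m : ℕ) : (M (m + 1)).card = (M m).card + (m / 2 + 1) := by
  rw [M_succ]
  rw [Finset.card_union_of_disjoint]
  · congr 1
    rw [Finset.card_image_of_injOn, card_range]
    intro x hx y hy hxy
    simp only [Prod.mk.injEq] at hxy; exact hxy.1
  · rw [Finset.disjoint_left]
    rintro ⟨i, j⟩ h1 h2
    rw [mem_M] at h1
    simp only [mem_image, mem_range] at h2
    obtain ⟨x, hx, hx2⟩ := h2
    rw [Prod.mk.injEq] at hx2
    omega

lemma Params_succ (n : ℕ) :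
    Params (n + 1) = Params n ∪ (M n).image fun ij => (ij.2 - ij.1, ij.2, n) := by
  ext ⟨A, E, B⟩
  simp only [mem_Params, mem_union, mem_image, mem_M]
  constructor
  · rintro ⟨h1, h2, h3, h4⟩
    rcases lt_or_ge B n with h | h
    · exact Or.inl ⟨h1, h2, h, h4⟩
    · refine Or.inr ⟨(E - A, E), ⟨by omega, by omega⟩, ?_⟩
      rw [Prod.mk.injEq, Prod.mk.injEq]
      omega
  · rintro (⟨h1, h2, h3, h4⟩ | ⟨⟨i, j⟩, ⟨h1, h2⟩, h3⟩)
    · exact ⟨h1, h2, by omega, h4⟩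
    · rw [Prod.mk.injEq, Prod.mk.injEq] at h3
      dsimp only at h3 ⊢
      omega

lemma Params_succ_card (n : ℕ) :
    (Params (n + 1)).card = (Params n).card + (M n).card := by
  rw [Params_succ]
  rw [Finset.card_union_of_disjoint]
  · congr 1
    rw [Finset.card_image_of_injOn]
    rintro ⟨i, j⟩ h1 ⟨i', j'⟩ h2 heq
    simp only [Finset.mem_coe, mem_M] at h1 h2
    rw [Prod.mk.injEq, Prod.mk.injEq] at heq
    rw [Prod.mk.injEq]
    omega
  · rw [Finset.disjoint_left]
    rintro ⟨A, E, B⟩ h1 h2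
    rw [mem_Params] at h1
    simp only [mem_image, mem_M] at h2
    obtain ⟨⟨i, j⟩, _, h3⟩ := h2
    rw [Prod.mk.injEq, Prod.mk.injEq] at h3
    dsimp only at h1 h3
    omega

lemma M_card : ∀ k : ℕ, (M (2 * k)).card = k * k + k ∧ (M (2 * k + 1)).card = (k + 1) * (k + 1) := by
  intro k
  induction k with
  | zero =>
    constructor
    · simp [M_zero]
    · rw [show 2 * 0 + 1 = 0 + 1 from rfl, M_succ_card, M_zero]
      simp
  | succ k ih =>
    have h1 : (M (2 * (k + 1))).card = (M (2 * k + 1)).card + ((2 * k + 1) / 2 + 1) := by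
      rw [show 2 * (k + 1) = (2 * k + 1) + 1 from by ring]
      exact M_succ_card (2 * k + 1)
    have h2 : (M (2 * (k + 1) + 1)).card = (M (2 * (k + 1))).card + ((2 * (k + 1)) / 2 + 1) :=
      M_succ_card (2 * (k + 1))
    constructor
    · rw [h1, ih.2]
      have h5 : (2 * k + 1) / 2 = k := by omega
      rw [h5]
    · rw [h2, h1, ih.2]
      have h3 : (2 * k + 1) / 2 = k := by omega
      have h4 : (2 * (k + 1)) / 2 = k + 1 := by omega
      rw [h3, h4]; ring

lemma P_card : ∀ k : ℕ,
    6 * (Params (2 * k)).card + k = 4 * k ^ 3 + 3 * k ^ 2 ∧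
    6 * (Params (2 * k + 1)).card = 4 * k ^ 3 + 9 * k ^ 2 + 5 * k := by
  intro k
  induction k with
  | zero =>
    constructor
    · simp [Params_zero]
    · rw [show 2 * 0 + 1 = 0 + 1 from rfl, Params_succ_card, Params_zero, M_zero]
      simp
  | succ k ih =>
    have hM := M_card k
    have h1 : (Params (2 * k + 1)).card = (Params (2 * k)).card + (M (2 * k)).card :=
      Params_succ_card (2 * k)
    have h2 : (Params (2 * (k + 1))).card = (Params (2 * k + 1)).card + (M (2 * k + 1)).card := by
      rw [show 2 * (k + 1) = (2 * k + 1) + 1 from by ring]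
      exact Params_succ_card (2 * k + 1)
    have h3 : (Params (2 * (k + 1) + 1)).card = (Params (2 * (k + 1))).card + (M (2 * (k + 1))).card :=
      Params_succ_card (2 * (k + 1))
    have hM2 : (M (2 * (k + 1))).card = (k + 1) * (k + 1) + (k + 1) := (M_card (k + 1)).1
    constructor
    · rw [h2, h1, hM.1, hM.2]
      have := ih.1
      have expand : 6 * ((Params (2 * k)).card + (k * k + k) + (k + 1) * (k + 1)) + (k + 1)
          = (6 * (Params (2 * k)).card + k) + (12 * k ^ 2 + 18 * k + 7) := by ring
      rw [expand, this]; ring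
    · rw [h3, h2, h1, hM.1, hM.2, hM2]
      have := ih.1
      have expand : 6 * ((Params (2 * k)).card + (k * k + k) + (k + 1) * (k + 1) + ((k + 1) * (k + 1) + (k + 1)))
          = (6 * (Params (2 * k)).card + k) + (18 * k ^ 2 + 35 * k + 18) := by ring
      rw [expand, this]; ring

-- NEW MATERIAL BELOW

noncomputable def toPerm (n : ℕ) (t : ℕ × ℕ × ℕ) : Equiv.Perm (Fin n) :=
  if h : t.1 ≤ t.2.1 ∧ t.2.1 < t.2.2 ∧ t.2.2 < n then
    shapePerm n t.1 t.2.1 t.2.2 h.1 h.2.1 h.2.2 else 1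

theorem complete {n : ℕ} (π : Equiv.Perm (Fin n)) (h312 : Avoids312 π)
    (h2143 : Avoids2143 π) (hsq : Avoids312 (π * π)) :
    π = 1 ∨ ∃ t ∈ Params n, π = toPerm n t := by
  classical
  by_cases hone : π = 1
  · exact Or.inl hone
  right
  have A3gen : ∀ (σ : Equiv.Perm (Fin n)), Avoids312 σ →
      ∀ i j l, i < j → j < l → natFun σ j < natFun σ l → natFun σ l < natFun σ i → False := by
    intro σ hσ i j l hij hjl h3 h4
    rcases lt_or_ge l n with hl | hl
    · have hj : j < n := hjl.trans hl
      have hi : i < n := hij.trans hj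
      rw [natFun_eq σ hj, natFun_eq σ hl] at h3
      rw [natFun_eq σ hl, natFun_eq σ hi] at h4
      exact hσ ⟨⟨i, hi⟩, ⟨j, hj⟩, ⟨l, hl⟩, Fin.mk_lt_mk.2 hij, Fin.mk_lt_mk.2 hjl,
        Fin.lt_def.2 h3, Fin.lt_def.2 h4⟩
    · have hfl : natFun σ l = l := natFun_ge σ hl
      rcases lt_or_ge i n with hi | hi
      · have := natFun_lt σ hi; omega
      · have h5 : natFun σ i = i := natFun_ge σ hi; omega
  have A4n : ∀ i j l m, i < j → j < l → l < m → natFun π j < natFun π i →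
      natFun π m < natFun π l → natFun π i < natFun π m → False := by
    intro i j l m h1 h2 h3 h4 h5 h6
    rcases lt_or_ge m n with hm | hm
    · have hl : l < n := h3.trans hm
      have hj : j < n := h2.trans hl
      have hi : i < n := h1.trans hj
      rw [natFun_eq π hj, natFun_eq π hi] at h4
      rw [natFun_eq π hm, natFun_eq π hl] at h5
      rw [natFun_eq π hi, natFun_eq π hm] at h6
      exact h2143 ⟨⟨i, hi⟩, ⟨j, hj⟩, ⟨l, hl⟩, ⟨m, hm⟩, Fin.mk_lt_mk.2 h1, Fin.mk_lt_mk.2 h2,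
        Fin.mk_lt_mk.2 h3, Fin.lt_def.2 h4, Fin.lt_def.2 h5, Fin.lt_def.2 h6⟩
    · have hfm : natFun π m = m := natFun_ge π hm
      rcases lt_or_ge l n with hl | hl
      · have := natFun_lt π hl; omega
      · have := natFun_ge π hl; omega
  have ASn : ∀ i j l, i < j → j < l → natFun π (natFun π j) < natFun π (natFun π l) →
      natFun π (natFun π l) < natFun π (natFun π i) → False := by
    intro i j l h1 h2 h3 h4
    rw [← natFun_mul, ← natFun_mul] at h3
    rw [← natFun_mul, ← natFun_mul] at h4
    exact A3gen (π * π) hsq i j l h1 h2 h3 h4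
  have hex : ∃ x, natFun π x ≠ x := by
    by_contra hcon; push_neg at hcon
    apply hone
    apply Equiv.ext; intro x
    apply Fin.ext
    have h7 := hcon x.1
    rw [natFun_eq π x.2] at h7
    simpa using h7
  obtain ⟨a, e, b, hae, heb, hbn, h5c, hform⟩ :=
    complete_nat n (natFun π) (natFun π⁻¹) (natFun_inv_left π) (natFun_inv_right π)
      (fun x h => natFun_ge π h) (A3gen π h312) A4n ASn hex
  refine ⟨(a, e, b), mem_Params.2 ⟨hae, heb, hbn, h5c⟩, ?_⟩
  have hcond : (a, e, b).1 ≤ (a, e, b).2.1 ∧ (a, e, b).2.1 < (a, e, b).2.2 ∧ (a, e, b).2.2 < n :=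
    ⟨hae, heb, hbn⟩
  rw [toPerm, dif_pos hcond]
  apply Equiv.ext; intro x
  apply Fin.ext
  rw [shapePerm_apply]
  have h6 : natFun π x.1 = (π x : ℕ) := by
    rw [natFun_eq π x.2, Fin.eta]
  rw [← h6, hform]

theorem card_good (m : ℕ) :
    Nat.card {π : Equiv.Perm (Fin m) // Avoids312 π ∧ Avoids2143 π ∧ Avoids312 (π * π)} =
      1 + (Params m).card := by
  classical
  rw [Nat.card_eq_fintype_card, Fintype.card_subtype]
  have hset : (univ.filter fun π : Equiv.Perm (Fin m) =>
      Avoids312 π ∧ Avoids2143 π ∧ Avoids312 (π * π))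
      = insert 1 ((Params m).image (toPerm m)) := by
    ext π
    simp only [mem_filter, mem_univ, true_and, mem_insert, mem_image]
    constructor
    · rintro ⟨h1, h2, h3⟩
      rcases complete π h1 h2 h3 with h | ⟨t, ht, h⟩
      · exact Or.inl h
      · exact Or.inr ⟨t, ht, h.symm⟩
    · rintro (rfl | ⟨t, ht, rfl⟩)
      · exact ⟨one_avoids312, one_avoids2143, by rw [one_mul]; exact one_avoids312⟩
      · obtain ⟨h1, h2, h3, h4⟩ := mem_Params.1 ht
        have hcond : t.1 ≤ t.2.1 ∧ t.2.1 < t.2.2 ∧ t.2.2 < m := ⟨h1, h2, h3⟩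
        rw [toPerm, dif_pos hcond]
        exact ⟨shape_avoids312 _ _ _, shape_avoids2143 _ _ _, shape_sq_avoids312 _ _ _ h4⟩
  have hinj : Set.InjOn (toPerm m) (Params m) := by
    rintro ⟨a, e, b⟩ ht ⟨a', e', b'⟩ ht' heq
    rw [Finset.mem_coe, mem_Params] at ht ht'
    dsimp only at ht ht'
    obtain ⟨g1, g2, g3, g4⟩ := ht
    obtain ⟨g1', g2', g3', g4'⟩ := ht'
    have hcond : (a, e, b).1 ≤ (a, e, b).2.1 ∧ (a, e, b).2.1 < (a, e, b).2.2 ∧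
        (a, e, b).2.2 < m := ⟨g1, g2, g3⟩
    have hcond' : (a', e', b').1 ≤ (a', e', b').2.1 ∧ (a', e', b').2.1 < (a', e', b').2.2 ∧
        (a', e', b').2.2 < m := ⟨g1', g2', g3'⟩
    rw [toPerm, dif_pos hcond, toPerm, dif_pos hcond'] at heq
    have key : ∀ x, x < m → shape a e b x = shape a' e' b' x := by
      intro x hx
      have := congrArg (fun σ : Equiv.Perm (Fin m) => (σ ⟨x, hx⟩ : ℕ)) heq
      dsimp only at this
      rwa [shapePerm_apply, shapePerm_apply] at this
    have haa : a = a' := by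
      rcases lt_trichotomy a a' with h | h | h
      · have := key a (by omega)
        unfold shape at this; split_ifs at this <;> omega
      · exact h
      · have := key a' (by omega)
        unfold shape at this; split_ifs at this <;> omega
    have hbb : b = b' := by
      rcases lt_trichotomy b b' with h | h | h
      · have := key b' (by omega)
        unfold shape at this; split_ifs at this <;> omega
      · exact h
      · have := key b (by omega)
        unfold shape at this; split_ifs at this <;> omega
    have hee : e = e' := by
      subst haa; subst hbb
      rcases lt_trichotomy e e' with h | h | h
      · have := key e' (by omega)
        unfold shape at this; split_ifs at this <;> omega
      · exact h
      · have := key e (by omega)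
        unfold shape at this; split_ifs at this <;> omega
    rw [haa, hbb, hee]
  have hnotmem : (1 : Equiv.Perm (Fin m)) ∉ (Params m).image (toPerm m) := by
    intro hmem
    obtain ⟨t, ht, heq⟩ := mem_image.1 hmem
    obtain ⟨h1, h2, h3, h4⟩ := mem_Params.1 ht
    have hcond : t.1 ≤ t.2.1 ∧ t.2.1 < t.2.2 ∧ t.2.2 < m := ⟨h1, h2, h3⟩
    rw [toPerm, dif_pos hcond] at heq
    have := congrArg (fun σ : Equiv.Perm (Fin m) => (σ ⟨t.2.2, h3⟩ : ℕ)) heq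
    rw [shapePerm_apply] at this
    simp only [Equiv.Perm.coe_one, id_eq] at this
    unfold shape at this
    split_ifs at this <;> omega
  rw [hset, Finset.card_insert_of_notMem hnotmem, Finset.card_image_of_injOn hinj]
  omega

end Stmt18Aux

open Stmt18Aux

theorem stmt18 (n : ℕ) (hn : 1 ≤ n) (k : ℕ) :
    (n = 2 * k →
      (Nat.card {π : Equiv.Perm (Fin n) // Avoids312 π ∧ Avoids2143 π ∧ Avoids312 (π * π)} : ℚ) =
        (4 * k ^ 3 + 3 * k ^ 2 - k) / 6 + 1) ∧
    (n = 2 * k + 1 →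
      (Nat.card {π : Equiv.Perm (Fin n) // Avoids312 π ∧ Avoids2143 π ∧ Avoids312 (π * π)} : ℚ) =
        (4 * k ^ 3 + 9 * k ^ 2 + 5 * k) / 6 + 1) := by
  constructor
  · intro h; subst h
    rw [card_good]
    have h1 := (P_card k).1
    have h2 : ((Params (2 * k)).card : ℚ) = (4 * (k : ℚ) ^ 3 + 3 * (k : ℚ) ^ 2 - (k : ℚ)) / 6 := by
      have h3 := congrArg (Nat.cast : ℕ → ℚ) h1
      push_cast at h3
      field_simp
      linarith
    push_cast
    rw [h2]
    ring
  · intro h; subst h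
    rw [card_good]
    have h1 := (P_card k).2
    have h2 : ((Params (2 * k + 1)).card : ℚ) =
        (4 * (k : ℚ) ^ 3 + 9 * (k : ℚ) ^ 2 + 5 * (k : ℚ)) / 6 := by
      have h3 := congrArg (Nat.cast : ℕ → ℚ) h1
      push_cast at h3
      field_simp
      linarith
    push_cast
    rw [h2]
    ring
end

section
/- Let π be a permutation of [n] with π(i) = 1 for some i with 1 ≤ i ≤ n−1. If π avoids both 312 and 231, then π = δ_i ⊕ μ, where δ_i is the decreasing permutation i(i−1)⋯1 and μ is a permutation of [n−i] avoiding 312 and 231; moreover, π² avoids 312 if and only if μ² avoids 312. -/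
open Equiv Finset

def Avoids231 {n : ℕ} (π : Equiv.Perm (Fin n)) : Prop :=
  ¬ ∃ i j l : Fin n, i < j ∧ j < l ∧ π l < π i ∧ π i < π j

theorem stmt19 (n : ℕ) (i : ℕ) (hi : 1 ≤ i) (hin : i ≤ n - 1) (hn : 2 ≤ n)
    (π : Equiv.Perm (Fin n)) (hπ1 : π ⟨i - 1, by omega⟩ = ⟨0, by omega⟩)
    (hav : Avoids312 π ∧ Avoids231 π) :
    ∃ μ : Equiv.Perm (Fin (n - i)),
      (∀ j : Fin n, ((j : ℕ) < i → (π j : ℕ) = i - 1 - j) ∧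
        (i ≤ (j : ℕ) → (π j : ℕ) = μ ⟨(j : ℕ) - i, by omega⟩ + i)) ∧
      Avoids312 μ ∧ Avoids231 μ ∧
      (Avoids312 (π * π) ↔ Avoids312 (μ * μ)) := by
  obtain ⟨h312, h231⟩ := hav
  have hni : i < n := by omega
  set p : Fin n := ⟨i - 1, by omega⟩ with hp
  have hpv : (p : ℕ) = i - 1 := rfl
  have hπp : π p = ⟨0, by omega⟩ := hπ1
  have hπpv : (π p : ℕ) = 0 := by rw [hπp]
  -- any x ≠ p has positive image
  have hzero : ∀ x : Fin n, x ≠ p → 0 < (π x : ℕ) := by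
    intro x hx
    rcases Nat.eq_zero_or_pos (π x : ℕ) with h | h
    · exact absurd (π.injective (show π x = π p from Fin.ext (by omega))) hx
    · exact h
  -- block value forcing: positions left of p map below positions right of p
  have L1 : ∀ a b : Fin n, (a : ℕ) < i - 1 → i ≤ (b : ℕ) → (π a : ℕ) < (π b : ℕ) := by
    intro a b ha hb
    have hne : (π a : ℕ) ≠ (π b : ℕ) := by
      intro h
      have := π.injective (Fin.ext h)
      omega
    by_contra hcon
    have hba : (π b : ℕ) < (π a : ℕ) := by omega
    apply h312
    refine ⟨a, p, b, by omega, by omega, ?_, by omega⟩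
    have h0 : 0 < (π b : ℕ) := hzero b (by intro h; rw [h] at hb; omega)
    omega
  -- cardinality of {x | π x < v}
  have hcard : ∀ v : Fin n, (Finset.univ.filter (fun x => (π x : ℕ) < (v : ℕ))).card = (v : ℕ) := by
    intro v
    have h : Finset.univ.filter (fun x => (π x : ℕ) < (v : ℕ)) = (Finset.Iio v).image π.symm := by
      ext x
      simp only [Finset.mem_filter, Finset.mem_univ, true_and, Finset.mem_image, Finset.mem_Iio]
      constructor
      · intro hx
        exact ⟨π x, Fin.lt_def.mpr hx, by simp⟩
      · rintro ⟨b, hb, rfl⟩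
        rw [Equiv.apply_symm_apply]
        exact Fin.lt_def.mp hb
    rw [h, Finset.card_image_of_injective _ π.symm.injective, Fin.card_Iio]
  have hFi : (Finset.univ.filter (fun x : Fin n => (x : ℕ) < i)).card = i := by
    have h : Finset.univ.filter (fun x : Fin n => (x : ℕ) < i) = Finset.Iio (⟨i, hni⟩ : Fin n) := by
      ext x
      simp only [Finset.mem_filter, Finset.mem_univ, true_and, Finset.mem_Iio, Fin.lt_def,
        Fin.val_mk]
    rw [h, Fin.card_Iio]
  -- L2 : positions < i map to values < i
  have L2 : ∀ a : Fin n, (a : ℕ) < i → (π a : ℕ) < i := by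
    intro a ha
    rcases eq_or_lt_of_le (show (a : ℕ) ≤ i - 1 by omega) with heq | hlt
    · have : a = p := Fin.ext (by omega)
      rw [this]; omega
    · have hsub : insert a (Finset.univ.filter (fun x => (π x : ℕ) < (π a : ℕ)))
          ⊆ Finset.univ.filter (fun x : Fin n => (x : ℕ) < i) := by
        intro x hx
        simp only [Finset.mem_insert, Finset.mem_filter, Finset.mem_univ, true_and] at hx ⊢
        rcases hx with rfl | hx
        · omega
        · by_contra hxi
          have := L1 a x hlt (by omega)
          omega
      have hc1 := Finset.card_le_card hsub
      rw [Finset.card_insert_of_notMem (by simp), hcard (π a), hFi] at hc1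
      omega
  -- L3 : positions ≥ i map to values ≥ i
  have L3 : ∀ a : Fin n, i ≤ (a : ℕ) → i ≤ (π a : ℕ) := by
    intro a ha
    by_contra h
    push_neg at h
    have hmem : π a ∈ Finset.univ.filter (fun x : Fin n => (x : ℕ) < i) := by
      simp only [Finset.mem_filter, Finset.mem_univ, true_and]; exact h
    have hsub : (Finset.univ.filter (fun x : Fin n => (x : ℕ) < i)).image π
        ⊆ Finset.univ.filter (fun x : Fin n => (x : ℕ) < i) := by
      intro x hx
      simp only [Finset.mem_image, Finset.mem_filter, Finset.mem_univ, true_and] at hx ⊢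
      obtain ⟨b, hb, rfl⟩ := hx
      exact L2 b hb
    have heq := Finset.eq_of_subset_of_card_le hsub
      (by rw [Finset.card_image_of_injective _ π.injective])
    rw [← heq] at hmem
    simp only [Finset.mem_image, Finset.mem_filter, Finset.mem_univ, true_and] at hmem
    obtain ⟨b, hb, hba⟩ := hmem
    obtain rfl := π.injective hba
    omega
  -- strictly decreasing on the first block
  have Ldec : ∀ a b : Fin n, a < b → (b : ℕ) < i → (π b : ℕ) < (π a : ℕ) := by
    intro a b hab hbi
    have hap : a ≠ p := by
      intro h
      have : (a : ℕ) = i - 1 := by rw [h]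
      omega
    have h0a : 0 < (π a : ℕ) := hzero a hap
    rcases eq_or_lt_of_le (show (b : ℕ) ≤ i - 1 by omega) with heq | hlt
    · have : b = p := Fin.ext (by omega)
      rw [this]; omega
    · have hne : (π a : ℕ) ≠ (π b : ℕ) := by
        intro h
        have := π.injective (Fin.ext h)
        omega
      by_contra hcon
      apply h231
      refine ⟨a, b, p, hab, by omega, ?_, by omega⟩
      omega
  -- exact values on the first block
  have L4 : ∀ a : Fin n, (a : ℕ) < i → (π a : ℕ) = i - 1 - (a : ℕ) := by
    intro a ha
    have hS : Finset.univ.filter (fun x => (π x : ℕ) < (π a : ℕ)) = Finset.Ioc a p := by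
      ext x
      simp only [Finset.mem_filter, Finset.mem_univ, true_and, Finset.mem_Ioc, Fin.lt_def,
        Fin.le_def, hpv]
      constructor
      · intro hx
        have hπa := L2 a ha
        have hxi : (x : ℕ) < i := by
          by_contra hc
          have := L3 x (by omega)
          omega
        refine ⟨?_, by omega⟩
        by_contra hc
        push_neg at hc
        rcases eq_or_lt_of_le hc with he | hl
        · have : x = a := Fin.ext he
          rw [this] at hx; omega
        · have := Ldec x a (by omega) ha
          omega
      · rintro ⟨h1, h2⟩
        exact Ldec a x (by omega) (by omega)
    have hc := hcard (π a)
    rw [hS, Fin.card_Ioc, hpv] at hc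
    omega
  -- build μ
  have hlt1 : ∀ k : ℕ, k < n - i → k + i < n := fun k hk => by omega
  have hfb : ∀ k : Fin (n - i), (π ⟨(k : ℕ) + i, hlt1 (k : ℕ) k.isLt⟩ : ℕ) - i < n - i := by
    intro k
    have h1 := (π ⟨(k : ℕ) + i, hlt1 (k : ℕ) k.isLt⟩).isLt
    have h2 := L3 ⟨(k : ℕ) + i, hlt1 (k : ℕ) k.isLt⟩ (Nat.le_add_left i (k : ℕ))
    omega
  obtain ⟨μ, hμ⟩ : ∃ μ : Equiv.Perm (Fin (n - i)), ∀ k : Fin (n - i),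
      ((μ k : ℕ)) + i = (π ⟨(k : ℕ) + i, hlt1 (k : ℕ) k.isLt⟩ : ℕ) := by
    have hinj : Function.Injective
        (fun k : Fin (n - i) =>
          (⟨(π ⟨(k : ℕ) + i, hlt1 (k : ℕ) k.isLt⟩ : ℕ) - i, hfb k⟩ : Fin (n - i))) := by
      intro a b hab
      have h := congrArg Fin.val hab
      simp only [Fin.val_mk] at h
      have ha := L3 ⟨(a : ℕ) + i, hlt1 (a : ℕ) a.isLt⟩ (Nat.le_add_left i (a : ℕ))
      have hb := L3 ⟨(b : ℕ) + i, hlt1 (b : ℕ) b.isLt⟩ (Nat.le_add_left i (b : ℕ))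
      have heq : π ⟨(a : ℕ) + i, hlt1 (a : ℕ) a.isLt⟩ = π ⟨(b : ℕ) + i, hlt1 (b : ℕ) b.isLt⟩ :=
        Fin.ext (by omega)
      have h2 := congrArg Fin.val (π.injective heq)
      simp only [Fin.val_mk] at h2
      exact Fin.ext (by omega)
    refine ⟨Equiv.ofBijective _ (Finite.injective_iff_bijective.mp hinj), fun k => ?_⟩
    have hge := L3 ⟨(k : ℕ) + i, hlt1 (k : ℕ) k.isLt⟩ (Nat.le_add_left i (k : ℕ))
    show (π ⟨(k : ℕ) + i, hlt1 (k : ℕ) k.isLt⟩ : ℕ) - i + i = _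
    omega
  -- key transfer lemma
  have hKey : ∀ (x : Fin n) (y : Fin (n - i)), (x : ℕ) = (y : ℕ) + i →
      (π x : ℕ) = (μ y : ℕ) + i := by
    intro x y hxy
    have h2 := hμ y
    have h3 : (⟨(y : ℕ) + i, hlt1 (y : ℕ) y.isLt⟩ : Fin n) = x :=
      Fin.ext (by simp only [Fin.val_mk]; omega)
    rw [h3] at h2
    omega
  have hKey2 : ∀ (x : Fin n) (y : Fin (n - i)), (x : ℕ) = (y : ℕ) + i →
      ((π * π) x : ℕ) = ((μ * μ) y : ℕ) + i := by
    intro x y hxy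
    simp only [Equiv.Perm.mul_apply]
    exact hKey _ _ (hKey _ _ hxy)
  -- squared identity on the first block
  have hsq1 : ∀ j : Fin n, (j : ℕ) < i → (π * π) j = j := by
    intro j hj
    have h1 := L4 j hj
    have h2 := L4 (π j) (by omega)
    simp only [Equiv.Perm.mul_apply]
    exact Fin.ext (by omega)
  refine ⟨μ, ?_, ?_, ?_, ?_⟩
  · intro j
    refine ⟨fun hj => L4 j hj, fun hj => ?_⟩
    exact hKey j _ (show (j : ℕ) = (j : ℕ) - i + i by omega)
  · rintro ⟨a, b, c, hab, hbc, h1, h2⟩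
    apply h312
    refine ⟨⟨(a : ℕ) + i, hlt1 (a : ℕ) a.isLt⟩, ⟨(b : ℕ) + i, hlt1 (b : ℕ) b.isLt⟩,
      ⟨(c : ℕ) + i, hlt1 (c : ℕ) c.isLt⟩, Fin.mk_lt_mk.mpr (by omega),
      Fin.mk_lt_mk.mpr (by omega), ?_, ?_⟩
    · have e1 := hKey ⟨(b : ℕ) + i, hlt1 (b : ℕ) b.isLt⟩ b rfl
      have e2 := hKey ⟨(c : ℕ) + i, hlt1 (c : ℕ) c.isLt⟩ c rfl
      omega
    · have e1 := hKey ⟨(c : ℕ) + i, hlt1 (c : ℕ) c.isLt⟩ c rfl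
      have e2 := hKey ⟨(a : ℕ) + i, hlt1 (a : ℕ) a.isLt⟩ a rfl
      omega
  · rintro ⟨a, b, c, hab, hbc, h1, h2⟩
    apply h231
    refine ⟨⟨(a : ℕ) + i, hlt1 (a : ℕ) a.isLt⟩, ⟨(b : ℕ) + i, hlt1 (b : ℕ) b.isLt⟩,
      ⟨(c : ℕ) + i, hlt1 (c : ℕ) c.isLt⟩, Fin.mk_lt_mk.mpr (by omega),
      Fin.mk_lt_mk.mpr (by omega), ?_, ?_⟩
    · have e1 := hKey ⟨(c : ℕ) + i, hlt1 (c : ℕ) c.isLt⟩ c rfl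
      have e2 := hKey ⟨(a : ℕ) + i, hlt1 (a : ℕ) a.isLt⟩ a rfl
      omega
    · have e1 := hKey ⟨(a : ℕ) + i, hlt1 (a : ℕ) a.isLt⟩ a rfl
      have e2 := hKey ⟨(b : ℕ) + i, hlt1 (b : ℕ) b.isLt⟩ b rfl
      omega
  · constructor
    · intro hpp
      rintro ⟨a, b, c, hab, hbc, h1, h2⟩
      apply hpp
      refine ⟨⟨(a : ℕ) + i, hlt1 (a : ℕ) a.isLt⟩, ⟨(b : ℕ) + i, hlt1 (b : ℕ) b.isLt⟩,
        ⟨(c : ℕ) + i, hlt1 (c : ℕ) c.isLt⟩, Fin.mk_lt_mk.mpr (by omega),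
      Fin.mk_lt_mk.mpr (by omega), ?_, ?_⟩
      · have e1 := hKey2 ⟨(b : ℕ) + i, hlt1 (b : ℕ) b.isLt⟩ b rfl
        have e2 := hKey2 ⟨(c : ℕ) + i, hlt1 (c : ℕ) c.isLt⟩ c rfl
        omega
      · have e1 := hKey2 ⟨(c : ℕ) + i, hlt1 (c : ℕ) c.isLt⟩ c rfl
        have e2 := hKey2 ⟨(a : ℕ) + i, hlt1 (a : ℕ) a.isLt⟩ a rfl
        omega
    · intro hmm
      rintro ⟨x, y, z, hxy, hyz, h1, h2⟩
      have hx : i ≤ (x : ℕ) := by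
        by_contra hc
        push_neg at hc
        have hx2 := hsq1 x hc
        rcases lt_or_ge (z : ℕ) i with hz | hz
        · have hz2 := hsq1 z hz
          rw [hx2, hz2] at h2
          have : (x : ℕ) < (z : ℕ) := by omega
          omega
        · have hz2 : i ≤ ((π * π) z : ℕ) := by
            simp only [Equiv.Perm.mul_apply]
            exact L3 _ (L3 _ hz)
          rw [hx2] at h2
          omega
      have hy : i ≤ (y : ℕ) := by omega
      have hz : i ≤ (z : ℕ) := by omega
      apply hmm
      refine ⟨⟨(x : ℕ) - i, by omega⟩, ⟨(y : ℕ) - i, by omega⟩, ⟨(z : ℕ) - i, by omega⟩,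
        by simp only [Fin.mk_lt_mk]; omega, by simp only [Fin.mk_lt_mk]; omega, ?_, ?_⟩
      · have e1 := hKey2 y ⟨(y : ℕ) - i, by omega⟩ (by simp only [Fin.val_mk]; omega)
        have e2 := hKey2 z ⟨(z : ℕ) - i, by omega⟩ (by simp only [Fin.val_mk]; omega)
        omega
      · have e1 := hKey2 z ⟨(z : ℕ) - i, by omega⟩ (by simp only [Fin.val_mk]; omega)
        have e2 := hKey2 x ⟨(x : ℕ) - i, by omega⟩ (by simp only [Fin.val_mk]; omega)
        omega
end
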